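/- arXiv:2604.26713 — 10 statements merged into one kernel-verified Lean document; each statement's English description precedes it below -/
import Mathlib

section
/- For all t₀ ≤ t, the reachable-set operator maps the attractor fibre at time t₀ exactly onto the attractor fibre at time t: Φ t t₀ (A t₀) = A t. In other words, the nonautonomous set (A t)_{t ∈ ℝ} is invariant for the set-valued evolution operator of the linear differential inclusion x' ∈ closedBall (L(t)x) ρ. -/
open MeasureTheory Set Metric Pointwise
open scoped RealInnerProductSpace

noncomputable section

abbrev Euc (d : ℕ) : Type := EuclideanSpace ℝ (Fin d)

/-- The set of admissible controls: measurable functions with values in the closed unit ball. -/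
def ctrlSet (d : ℕ) : Set (ℝ → Euc d) :=
  {ξ | Measurable ξ ∧ ∀ s, ‖ξ s‖ ≤ 1}

/-- The attractor fibre at time `t`. -/
def Afib (d : ℕ) (Ψ : ℝ → ℝ → (Euc d →L[ℝ] Euc d)) (ρ t : ℝ) : Set (Euc d) :=
  {x | ∃ ξ ∈ ctrlSet d, x = ρ • ∫ s in Set.Iic t, Ψ t s (ξ s)}

/-- The reachable-set operator of the linear differential inclusion. -/
def reach (d : ℕ) (Ψ : ℝ → ℝ → (Euc d →L[ℝ] Euc d)) (ρ t t₀ : ℝ) (S : Set (Euc d)) :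
    Set (Euc d) :=
  {y | ∃ x₀ ∈ S, ∃ ξ ∈ ctrlSet d, y = Ψ t t₀ x₀ + ρ • ∫ s in Set.Icc t₀ t, Ψ t s (ξ s)}

/-!
By the cocycle property, the integral defining a point of `A t` splits at `t₀` as
`∫_{-∞}^t Ψ t s ξ = Ψ t t₀ (∫_{-∞}^{t₀} Ψ t₀ s ξ) + ∫_{t₀}^t Ψ t s ξ`, so every point of `A t` is
reached from the point of `A t₀` generated by the same control. Conversely, the control generating
`x₀ ∈ A t₀` on `(-∞, t₀]` and the control driving `x₀` on `(t₀, t]` glue to a single admissible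
control generating the reached point.
-/

section EvolutionFamily

variable {E : Type*} [NormedAddCommGroup E] [NormedSpace ℝ E] {Ψ : ℝ → ℝ → E →L[ℝ] E}

theorem aestronglyMeasurable_evolution_apply (hΨ : Continuous fun p : ℝ × ℝ => Ψ p.1 p.2)
    (t : ℝ) {ξ : ℝ → E} {μ : Measure ℝ} (hξ : AEStronglyMeasurable ξ μ) :
    AEStronglyMeasurable (fun s => Ψ t s (ξ s)) μ :=
  isBoundedBilinearMap_apply.continuous.comp_aestronglyMeasurable₂
    (hΨ.comp (continuous_const.prodMk continuous_id)).aestronglyMeasurable hξ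

theorem integrableOn_evolution_apply_Iic (hΨ : Continuous fun p : ℝ × ℝ => Ψ p.1 p.2)
    {K γ : ℝ} (hγ : 0 < γ) (hstab : ∀ s t : ℝ, s ≤ t → ‖Ψ t s‖ ≤ K * Real.exp (-γ * (t - s)))
    {ξ : ℝ → E} {C : ℝ} (hξm : AEStronglyMeasurable ξ) (hξb : ∀ s, ‖ξ s‖ ≤ C) (t : ℝ) :
    IntegrableOn (fun s => Ψ t s (ξ s)) (Iic t) := by
  refine Integrable.mono' ((integrableOn_exp_mul_Iic hγ t).const_mul (K * Real.exp (-γ * t) * C))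
    (aestronglyMeasurable_evolution_apply hΨ t hξm.restrict) ?_
  filter_upwards [ae_restrict_mem measurableSet_Iic] with s hs
  calc ‖Ψ t s (ξ s)‖ ≤ ‖Ψ t s‖ * ‖ξ s‖ := (Ψ t s).le_opNorm _
    _ ≤ K * Real.exp (-γ * (t - s)) * C :=
        mul_le_mul (hstab s t hs) (hξb s) (norm_nonneg _) ((norm_nonneg _).trans (hstab s t hs))
    _ = K * Real.exp (-γ * t) * C * Real.exp (γ * s) := by
        rw [show -γ * (t - s) = -γ * t + γ * s by ring, Real.exp_add]; ring

theorem setIntegral_Iic_eq_evolution_add [CompleteSpace E]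
    (hΨ : ∀ t s r : ℝ, (Ψ t s).comp (Ψ s r) = Ψ t r) {ξ : ℝ → E} {t₀ t : ℝ} (ht : t₀ ≤ t)
    (h₀ : IntegrableOn (fun s => Ψ t₀ s (ξ s)) (Iic t₀))
    (h : IntegrableOn (fun s => Ψ t s (ξ s)) (Iic t)) :
    ∫ s in Iic t, Ψ t s (ξ s) =
      Ψ t t₀ (∫ s in Iic t₀, Ψ t₀ s (ξ s)) + ∫ s in Ioc t₀ t, Ψ t s (ξ s) := by
  have hpast : Ψ t t₀ (∫ s in Iic t₀, Ψ t₀ s (ξ s)) = ∫ s in Iic t₀, Ψ t s (ξ s) := by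
    rw [← ContinuousLinearMap.integral_comp_comm _ h₀]
    simp only [← ContinuousLinearMap.comp_apply, hΨ]
  rw [hpast, ← setIntegral_union (Iic_disjoint_Ioc le_rfl) measurableSet_Ioc
    (h.mono_set (Iic_subset_Iic.2 ht)) (h.mono_set Ioc_subset_Iic_self), Iic_union_Ioc_eq_Iic ht]

end EvolutionFamily

theorem piecewise_mem_ctrlSet {d : ℕ} {S : Set ℝ} [DecidablePred (· ∈ S)] (hS : MeasurableSet S)
    {ξ η : ℝ → Euc d} (hξ : ξ ∈ ctrlSet d) (hη : η ∈ ctrlSet d) : S.piecewise ξ η ∈ ctrlSet d := by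
  refine ⟨hξ.1.piecewise hS hη.1, fun s => ?_⟩
  by_cases hs : s ∈ S
  · simpa only [piecewise_eq_of_mem _ _ _ hs] using hξ.2 s
  · simpa only [piecewise_eq_of_notMem _ _ _ hs] using hη.2 s

theorem attractor_invariant_general
    (d : ℕ)
    (L : ℝ → (Euc d →L[ℝ] Euc d))
    (Ψ : ℝ → ℝ → (Euc d →L[ℝ] Euc d))
    (hΨc : Continuous fun p : ℝ × ℝ => Ψ p.1 p.2)
    (hΨcoc : ∀ t s r : ℝ, (Ψ t s).comp (Ψ s r) = Ψ t r)
    (K γ : ℝ) (hγ : 0 < γ)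
    (hstab : ∀ s t : ℝ, s ≤ t → ‖Ψ t s‖ ≤ K * Real.exp (-γ * (t - s)))
    (ρ : ℝ) :
    ∀ t₀ t : ℝ, t₀ ≤ t → reach d Ψ ρ t t₀ (Afib d Ψ ρ t₀) = Afib d Ψ ρ t := by
  intro t₀ t ht
  have hsplit : ∀ ζ ∈ ctrlSet d, ρ • ∫ s in Iic t, Ψ t s (ζ s) =
      Ψ t t₀ (ρ • ∫ s in Iic t₀, Ψ t₀ s (ζ s)) + ρ • ∫ s in Ioc t₀ t, Ψ t s (ζ s) := by
    intro ζ hζ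
    have hint := integrableOn_evolution_apply_Iic hΨc hγ hstab hζ.1.aestronglyMeasurable hζ.2
    rw [setIntegral_Iic_eq_evolution_add hΨcoc ht (hint t₀) (hint t), map_smul, smul_add]
  ext y
  -- On `Ioc t₀ t` the glued control `(Iic t₀).piecewise ξ η` agrees with `η` everywhere.
  simp only [reach, Afib, integral_Icc_eq_integral_Ioc]
  constructor
  · rintro ⟨_, ⟨ξ, hξ, rfl⟩, η, hη, rfl⟩
    have hζ := piecewise_mem_ctrlSet measurableSet_Iic hξ hη (S := Iic t₀)
    have hpast : ∫ s in Iic t₀, Ψ t₀ s ((Iic t₀).piecewise ξ η s) = ∫ s in Iic t₀, Ψ t₀ s (ξ s) :=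
      setIntegral_congr_fun measurableSet_Iic fun s hs => by rw [piecewise_eq_of_mem _ _ _ hs]
    have hfuture : ∫ s in Ioc t₀ t, Ψ t s ((Iic t₀).piecewise ξ η s) = ∫ s in Ioc t₀ t, Ψ t s (η s) :=
      setIntegral_congr_fun measurableSet_Ioc fun s hs => by
        rw [piecewise_eq_of_notMem _ _ _ (notMem_Iic.2 hs.1)]
    exact ⟨_, hζ, by rw [hsplit _ hζ, hpast, hfuture]⟩
  · rintro ⟨ζ, hζ, rfl⟩
    exact ⟨_, ⟨ζ, hζ, rfl⟩, ζ, hζ, hsplit ζ hζ⟩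

/-- Invariance of the attractor for the set-valued evolution operator. -/
theorem attractor_invariant
    (d : ℕ) (hd : 1 ≤ d)
    (L : ℝ → (Euc d →L[ℝ] Euc d)) (hL : Continuous L)
    (Ψ : ℝ → ℝ → (Euc d →L[ℝ] Euc d))
    (hΨc : Continuous fun p : ℝ × ℝ => Ψ p.1 p.2)
    (hΨid : ∀ t : ℝ, Ψ t t = ContinuousLinearMap.id ℝ (Euc d))
    (hΨcoc : ∀ t s r : ℝ, (Ψ t s).comp (Ψ s r) = Ψ t r)
    (hΨd : ∀ (s : ℝ) (x : Euc d) (t : ℝ), HasDerivAt (fun τ => Ψ τ s x) (L t (Ψ t s x)) t)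
    (K γ : ℝ) (hK : 1 ≤ K) (hγ : 0 < γ)
    (hstab : ∀ s t : ℝ, s ≤ t → ‖Ψ t s‖ ≤ K * Real.exp (-γ * (t - s)))
    (ρ : ℝ) (hρ : 0 < ρ) :
    ∀ t₀ t : ℝ, t₀ ≤ t → reach d Ψ ρ t t₀ (Afib d Ψ ρ t₀) = Afib d Ψ ρ t :=
  attractor_invariant_general d L Ψ hΨc hΨcoc K γ hγ hstab ρ
end
end

section
/- For every x₀ ∈ E, every control ξ ∈ 𝒰, and all t₀ ≤ t, the point y = Ψ t t₀ x₀ + ρ • ∫ s in Set.Icc t₀ t, Ψ t s (ξ s) satisfies Metric.infDist y (A t) ≤ K * (‖x₀‖ + ρ * K / γ) * Real.exp (-γ * (t - t₀)); i.e., every solution of x' = L(t)x + ρξ(t) approaches the attractor fibres exponentially fast, both forward in time and in the pullback sense. -/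
open MeasureTheory Set Metric Pointwise
open scoped RealInnerProductSpace

noncomputable section

/-! The control `ξ` that drives `y` from `x₀` also generates the point
`a = ρ ∫_{-∞}^t Ψ(t,s) ξ(s) ds` of the attractor fibre. By the cocycle property the two share
the contribution of `[t₀, t]`, so `y - a = Ψ(t,t₀) (x₀ - ρ ∫_{-∞}^{t₀} Ψ(t₀,s) ξ(s) ds)`. The
remaining integral has norm at most `∫_{-∞}^{t₀} K e^{-γ(t₀-s)} ds = K/γ`, and `Ψ(t,t₀)` contracts
by `K e^{-γ(t-t₀)}`. -/

theorem Real.exp_neg_mul_sub (γ t s : ℝ) :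
    Real.exp (-γ * (t - s)) = Real.exp (-γ * t) * Real.exp (γ * s) := by
  rw [← Real.exp_add]; ring_nf

theorem integrableOn_exp_neg_mul_sub_Iic {γ : ℝ} (hγ : 0 < γ) (t : ℝ) :
    IntegrableOn (fun s => Real.exp (-γ * (t - s))) (Iic t) := by
  simp_rw [Real.exp_neg_mul_sub]
  exact (integrableOn_exp_mul_Iic hγ t).const_mul _

theorem integral_exp_neg_mul_sub_Iic {γ : ℝ} (hγ : 0 < γ) (t : ℝ) :
    ∫ s in Iic t, Real.exp (-γ * (t - s)) = γ⁻¹ := by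
  simp only [Real.exp_neg_mul_sub]
  rw [integral_const_mul, integral_exp_mul_Iic hγ, mul_div_assoc', ← Real.exp_add]
  simp

def IsExpStable {E : Type*} [NormedAddCommGroup E] [NormedSpace ℝ E]
    (Ψ : ℝ → ℝ → E →L[ℝ] E) (K γ : ℝ) : Prop :=
  ∀ s t : ℝ, s ≤ t → ‖Ψ t s‖ ≤ K * Real.exp (-γ * (t - s))

def pullbackIntegral {E : Type*} [NormedAddCommGroup E] [NormedSpace ℝ E]
    (Ψ : ℝ → ℝ → E →L[ℝ] E) (ξ : ℝ → E) (t : ℝ) : E :=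
  ∫ s in Iic t, Ψ t s (ξ s)

namespace IsExpStable

variable {E : Type*} [NormedAddCommGroup E] [NormedSpace ℝ E]
  {Ψ : ℝ → ℝ → E →L[ℝ] E} {K γ : ℝ}

theorem nonneg (h : IsExpStable Ψ K γ) : 0 ≤ K := by
  simpa using (norm_nonneg _).trans (h 0 0 le_rfl)

theorem norm_apply_le (h : IsExpStable Ψ K γ) {s t : ℝ} (hst : s ≤ t) (x : E) :
    ‖Ψ t s x‖ ≤ K * Real.exp (-γ * (t - s)) * ‖x‖ :=
  (Ψ t s).le_of_opNorm_le (h s t hst) x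

theorem norm_apply_le_of_norm_le_one (h : IsExpStable Ψ K γ) {s t : ℝ} (hst : s ≤ t) {x : E}
    (hx : ‖x‖ ≤ 1) : ‖Ψ t s x‖ ≤ K * Real.exp (-γ * (t - s)) :=
  (h.norm_apply_le hst x).trans <|
    mul_le_of_le_one_right (mul_nonneg h.nonneg (Real.exp_pos _).le) hx

theorem integrableOn_Iic (h : IsExpStable Ψ K γ) (hγ : 0 < γ) {t : ℝ}
    (hΨ : Continuous (Ψ t)) {ξ : ℝ → E} (hξm : AEStronglyMeasurable ξ) (hξ : ∀ s, ‖ξ s‖ ≤ 1) :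
    IntegrableOn (fun s => Ψ t s (ξ s)) (Iic t) := by
  refine ((integrableOn_exp_neg_mul_sub_Iic hγ t).const_mul K).mono' ?_ ?_
  · exact ((ContinuousLinearMap.id ℝ (E →L[ℝ] E)).aestronglyMeasurable_comp₂
      hΨ.aestronglyMeasurable hξm).restrict
  · filter_upwards [ae_restrict_mem measurableSet_Iic] with s hs
    exact h.norm_apply_le_of_norm_le_one hs (hξ s)

theorem norm_pullbackIntegral_le (h : IsExpStable Ψ K γ) (hγ : 0 < γ) {ξ : ℝ → E}
    (hξ : ∀ s, ‖ξ s‖ ≤ 1) (t : ℝ) : ‖pullbackIntegral Ψ ξ t‖ ≤ K / γ := by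
  calc ‖pullbackIntegral Ψ ξ t‖ ≤ ∫ s in Iic t, K * Real.exp (-γ * (t - s)) := by
        refine norm_integral_le_of_norm_le
          ((integrableOn_exp_neg_mul_sub_Iic hγ t).const_mul K) ?_
        filter_upwards [ae_restrict_mem measurableSet_Iic] with s hs
        exact h.norm_apply_le_of_norm_le_one hs (hξ s)
    _ = K / γ := by rw [integral_const_mul, integral_exp_neg_mul_sub_Iic hγ, div_eq_mul_inv]

end IsExpStable

section Cocycle

variable {E : Type*} [NormedAddCommGroup E] [NormedSpace ℝ E] [CompleteSpace E]
  {Ψ : ℝ → ℝ → E →L[ℝ] E} {ξ : ℝ → E}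

theorem pullbackIntegral_eq_apply_add_setIntegral_Icc
    (hcoc : ∀ t s r : ℝ, (Ψ t s).comp (Ψ s r) = Ψ t r)
    (hint : ∀ t, IntegrableOn (fun s => Ψ t s (ξ s)) (Iic t)) {t₀ t : ℝ} (ht : t₀ ≤ t) :
    pullbackIntegral Ψ ξ t
      = Ψ t t₀ (pullbackIntegral Ψ ξ t₀) + ∫ s in Icc t₀ t, Ψ t s (ξ s) := by
  have hpast : Ψ t t₀ (pullbackIntegral Ψ ξ t₀) = ∫ s in Iic t₀, Ψ t s (ξ s) := by
    rw [pullbackIntegral, ← (Ψ t t₀).integral_comp_comm (hint t₀)]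
    refine setIntegral_congr_fun measurableSet_Iic fun s _ => ?_
    simp only [← ContinuousLinearMap.comp_apply, hcoc]
  rw [hpast, integral_Icc_eq_integral_Ioc, ← setIntegral_union (Iic_disjoint_Ioc le_rfl)
    measurableSet_Ioc ((hint t).mono_set (Iic_subset_Iic.mpr ht))
    ((hint t).mono_set Ioc_subset_Iic_self), Iic_union_Ioc_eq_Iic ht, pullbackIntegral]

end Cocycle

theorem attractor_exponential_attraction_general
    (d : ℕ)
    (L : ℝ → (Euc d →L[ℝ] Euc d))
    (Ψ : ℝ → ℝ → (Euc d →L[ℝ] Euc d))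
    (hΨc : Continuous fun p : ℝ × ℝ => Ψ p.1 p.2)
    (hΨcoc : ∀ t s r : ℝ, (Ψ t s).comp (Ψ s r) = Ψ t r)
    (K γ : ℝ) (hγ : 0 < γ)
    (hstab : ∀ s t : ℝ, s ≤ t → ‖Ψ t s‖ ≤ K * Real.exp (-γ * (t - s)))
    (ρ : ℝ) (hρ : 0 < ρ) :
    ∀ (x₀ : Euc d), ∀ ξ ∈ ctrlSet d, ∀ t₀ t : ℝ, t₀ ≤ t →
      Metric.infDist (Ψ t t₀ x₀ + ρ • ∫ s in Set.Icc t₀ t, Ψ t s (ξ s)) (Afib d Ψ ρ t)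
        ≤ K * (‖x₀‖ + ρ * K / γ) * Real.exp (-γ * (t - t₀)) := by
  intro x₀ ξ hξ t₀ t ht
  have hstab : IsExpStable Ψ K γ := hstab
  have hint (t : ℝ) : IntegrableOn (fun s => Ψ t s (ξ s)) (Iic t) :=
    hstab.integrableOn_Iic hγ (hΨc.comp (.prodMk_right t)) hξ.1.aestronglyMeasurable hξ.2
  have hdiff : (Ψ t t₀ x₀ + ρ • ∫ s in Icc t₀ t, Ψ t s (ξ s)) - ρ • pullbackIntegral Ψ ξ t
      = Ψ t t₀ (x₀ - ρ • pullbackIntegral Ψ ξ t₀) := by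
    rw [pullbackIntegral_eq_apply_add_setIntegral_Icc hΨcoc hint ht, map_sub, map_smul, smul_add]
    abel
  have hv : ‖x₀ - ρ • pullbackIntegral Ψ ξ t₀‖ ≤ ‖x₀‖ + ρ * (K / γ) := by
    grw [norm_sub_le, norm_smul, Real.norm_of_nonneg hρ.le,
      hstab.norm_pullbackIntegral_le hγ hξ.2]
  calc Metric.infDist _ (Afib d Ψ ρ t)
      ≤ dist (Ψ t t₀ x₀ + ρ • ∫ s in Icc t₀ t, Ψ t s (ξ s)) (ρ • pullbackIntegral Ψ ξ t) :=
        infDist_le_dist_of_mem ⟨ξ, hξ, rfl⟩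
    _ = ‖Ψ t t₀ (x₀ - ρ • pullbackIntegral Ψ ξ t₀)‖ := by rw [dist_eq_norm, hdiff]
    _ ≤ K * Real.exp (-γ * (t - t₀)) * (‖x₀‖ + ρ * (K / γ)) := by
        grw [hstab.norm_apply_le ht, hv]
        exact mul_nonneg hstab.nonneg (Real.exp_pos _).le
    _ = K * (‖x₀‖ + ρ * K / γ) * Real.exp (-γ * (t - t₀)) := by ring

/-- Exponential attraction of every solution to the attractor fibres. -/
theorem attractor_exponential_attraction
    (d : ℕ) (hd : 1 ≤ d)
    (L : ℝ → (Euc d →L[ℝ] Euc d)) (hL : Continuous L)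
    (Ψ : ℝ → ℝ → (Euc d →L[ℝ] Euc d))
    (hΨc : Continuous fun p : ℝ × ℝ => Ψ p.1 p.2)
    (hΨid : ∀ t : ℝ, Ψ t t = ContinuousLinearMap.id ℝ (Euc d))
    (hΨcoc : ∀ t s r : ℝ, (Ψ t s).comp (Ψ s r) = Ψ t r)
    (hΨd : ∀ (s : ℝ) (x : Euc d) (t : ℝ), HasDerivAt (fun τ => Ψ τ s x) (L t (Ψ t s x)) t)
    (K γ : ℝ) (hK : 1 ≤ K) (hγ : 0 < γ)
    (hstab : ∀ s t : ℝ, s ≤ t → ‖Ψ t s‖ ≤ K * Real.exp (-γ * (t - s)))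
    (ρ : ℝ) (hρ : 0 < ρ) :
    ∀ (x₀ : Euc d), ∀ ξ ∈ ctrlSet d, ∀ t₀ t : ℝ, t₀ ≤ t →
      Metric.infDist (Ψ t t₀ x₀ + ρ • ∫ s in Set.Icc t₀ t, Ψ t s (ξ s)) (Afib d Ψ ρ t)
        ≤ K * (‖x₀‖ + ρ * K / γ) * Real.exp (-γ * (t - t₀)) :=
  attractor_exponential_attraction_general d L Ψ hΨc hΨcoc K γ hγ hstab ρ hρ
end
end

section
/- Pullback attraction: for every t ∈ ℝ, every nonempty compact set C ⊆ E, and every ε > 0, there exists T ≤ t such that for all t₀ ≤ T one has Φ t t₀ C ⊆ Metric.thickening ε (A t). -/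
open MeasureTheory Set Metric Pointwise
open scoped RealInnerProductSpace

noncomputable section

/-- Pullback attraction of compact sets to the attractor. -/
theorem attractor_pullback_attracts
    (d : ℕ) (hd : 1 ≤ d)
    (L : ℝ → (Euc d →L[ℝ] Euc d)) (hL : Continuous L)
    (Ψ : ℝ → ℝ → (Euc d →L[ℝ] Euc d))
    (hΨc : Continuous fun p : ℝ × ℝ => Ψ p.1 p.2)
    (hΨid : ∀ t : ℝ, Ψ t t = ContinuousLinearMap.id ℝ (Euc d))
    (hΨcoc : ∀ t s r : ℝ, (Ψ t s).comp (Ψ s r) = Ψ t r)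
    (hΨd : ∀ (s : ℝ) (x : Euc d) (t : ℝ), HasDerivAt (fun τ => Ψ τ s x) (L t (Ψ t s x)) t)
    (K γ : ℝ) (hK : 1 ≤ K) (hγ : 0 < γ)
    (hstab : ∀ s t : ℝ, s ≤ t → ‖Ψ t s‖ ≤ K * Real.exp (-γ * (t - s)))
    (ρ : ℝ) (hρ : 0 < ρ) :
    ∀ t : ℝ, ∀ C : Set (Euc d), C.Nonempty → IsCompact C → ∀ ε > (0 : ℝ),
      ∃ T ≤ t, ∀ t₀ ≤ T, reach d Ψ ρ t t₀ C ⊆ Metric.thickening ε (Afib d Ψ ρ t) := by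
  intro t C hCne hCcomp ε hε
  obtain ⟨M, hM⟩ := hCcomp.isBounded.exists_norm_le
  obtain ⟨c0, hc0⟩ := hCne
  have hM0 : 0 ≤ M := le_trans (norm_nonneg c0) (hM c0 hc0)
  have hK0 : 0 < K := lt_of_lt_of_le one_pos hK
  set B := K * (M + 1) with hBdef
  have hB : 0 < B := mul_pos hK0 (by linarith)
  refine ⟨min t (t - (Real.log (B / ε) / γ + 1)), min_le_left _ _, ?_⟩
  intro t₀ ht₀ y hy
  obtain ⟨x₀, hx₀, ξ, hξ, rfl⟩ := hy
  have ht₀t : t₀ ≤ t := le_trans ht₀ (min_le_left _ _)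
  set ξ' : ℝ → Euc d := (Set.Ici t₀).indicator ξ with hξ'def
  have hξ'mem : ξ' ∈ ctrlSet d := by
    refine ⟨hξ.1.indicator measurableSet_Ici, fun s => ?_⟩
    by_cases h : s ∈ Set.Ici t₀
    · simpa [hξ'def, Set.indicator_of_mem h] using hξ.2 s
    · simp [hξ'def, Set.indicator_of_notMem h]
  have hInt : (∫ s in Set.Iic t, Ψ t s (ξ' s)) = ∫ s in Set.Icc t₀ t, Ψ t s (ξ s) := by
    have heq : (fun s => Ψ t s (ξ' s)) = (Set.Ici t₀).indicator (fun s => Ψ t s (ξ s)) := by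
      funext s
      by_cases h : s ∈ Set.Ici t₀
      · simp [hξ'def, Set.indicator_of_mem h]
      · simp [hξ'def, Set.indicator_of_notMem h]
    rw [heq, MeasureTheory.setIntegral_indicator measurableSet_Ici]
    congr 1
    rw [Set.inter_comm, Set.Ici_inter_Iic]
  set a : Euc d := ρ • ∫ s in Set.Iic t, Ψ t s (ξ' s) with hadef
  have ha : a ∈ Afib d Ψ ρ t := ⟨ξ', hξ'mem, rfl⟩
  rw [Metric.mem_thickening_iff]
  refine ⟨a, ha, ?_⟩
  have hdist : Ψ t t₀ x₀ + ρ • (∫ s in Set.Icc t₀ t, Ψ t s (ξ s)) - a = Ψ t t₀ x₀ := by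
    rw [hadef, hInt]; abel
  rw [dist_eq_norm, hdist]
  have hexp0 : 0 ≤ Real.exp (-γ * (t - t₀)) := Real.exp_nonneg _
  have h1 : ‖Ψ t t₀ x₀‖ ≤ B * Real.exp (-γ * (t - t₀)) := by
    calc ‖Ψ t t₀ x₀‖ ≤ ‖Ψ t t₀‖ * ‖x₀‖ := (Ψ t t₀).le_opNorm x₀
      _ ≤ (K * Real.exp (-γ * (t - t₀))) * (M + 1) := by
          apply mul_le_mul (hstab t₀ t ht₀t) (by linarith [hM x₀ hx₀]) (norm_nonneg _)
          positivity
      _ = B * Real.exp (-γ * (t - t₀)) := by ring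
  have h2 : B * Real.exp (-γ * (t - t₀)) < ε := by
    have ht₀' : t₀ ≤ t - (Real.log (B / ε) / γ + 1) := le_trans ht₀ (min_le_right _ _)
    have hlt : Real.log (B / ε) < γ * (t - t₀) := by
      have h3 : Real.log (B / ε) / γ + 1 ≤ t - t₀ := by linarith
      have h4 : Real.log (B / ε) / γ < t - t₀ := by linarith
      calc Real.log (B / ε) = γ * (Real.log (B / ε) / γ) := by field_simp
        _ < γ * (t - t₀) := by exact (mul_lt_mul_iff_right₀ hγ).mpr h4
    have hexp : Real.exp (-γ * (t - t₀)) < ε / B := by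
      have : Real.exp (-γ * (t - t₀)) < Real.exp (Real.log (ε / B)) := by
        apply Real.exp_lt_exp.mpr
        rw [Real.log_div (ne_of_gt hε) (ne_of_gt hB)]
        rw [show Real.log ε - Real.log B = -(Real.log B - Real.log ε) by ring,
          ← Real.log_div (ne_of_gt hB) (ne_of_gt hε)]
        linarith
      rwa [Real.exp_log (div_pos hε hB)] at this
    calc B * Real.exp (-γ * (t - t₀)) < B * (ε / B) := (mul_lt_mul_iff_right₀ hB).mpr hexp
      _ = ε := by field_simp
  linarith
end
end

section
/- Forward attraction: for every t₀ ∈ ℝ, every nonempty compact set C ⊆ E, and every ε > 0, there exists T ≥ t₀ such that for all t ≥ T one has Φ t t₀ C ⊆ Metric.thickening ε (A t). -/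
open MeasureTheory Set Metric Pointwise
open scoped RealInnerProductSpace

noncomputable section

lemma exp_mul_integrableOn_Iic {γ : ℝ} (hγ : 0 < γ) (c : ℝ) :
    IntegrableOn (fun s => Real.exp (γ * s)) (Iic c) := by
  rw [integrableOn_Iic_iff_integrableOn_Iio]
  have h1 : IntegrableOn (fun x => Real.exp (-γ * x)) (Ioi (-c)) :=
    exp_neg_integrableOn_Ioi _ hγ
  have h2 : Integrable ((Ioi (-c)).indicator fun x => Real.exp (-γ * x)) :=
    (integrable_indicator_iff measurableSet_Ioi).2 h1
  have h3 := h2.comp_neg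
  have heq : (fun x => ((Ioi (-c)).indicator fun x => Real.exp (-γ * x)) (-x))
      = (Iio c).indicator (fun s => Real.exp (γ * s)) := by
    ext x
    by_cases hx : x < c
    · rw [indicator_of_mem (by simpa using hx : -x ∈ Ioi (-c)),
        indicator_of_mem (by simpa using hx : x ∈ Iio c)]
      rw [neg_mul_neg]
    · rw [indicator_of_notMem (by simpa using hx),
        indicator_of_notMem (by simpa using hx)]
  rw [heq] at h3
  exact (integrable_indicator_iff measurableSet_Iio).1 h3

/-- Forward attraction of compact sets to the attractor. -/
theorem attractor_forward_attracts
    (d : ℕ) (hd : 1 ≤ d)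
    (L : ℝ → (Euc d →L[ℝ] Euc d)) (hL : Continuous L)
    (Ψ : ℝ → ℝ → (Euc d →L[ℝ] Euc d))
    (hΨc : Continuous fun p : ℝ × ℝ => Ψ p.1 p.2)
    (hΨid : ∀ t : ℝ, Ψ t t = ContinuousLinearMap.id ℝ (Euc d))
    (hΨcoc : ∀ t s r : ℝ, (Ψ t s).comp (Ψ s r) = Ψ t r)
    (hΨd : ∀ (s : ℝ) (x : Euc d) (t : ℝ), HasDerivAt (fun τ => Ψ τ s x) (L t (Ψ t s x)) t)
    (K γ : ℝ) (hK : 1 ≤ K) (hγ : 0 < γ)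
    (hstab : ∀ s t : ℝ, s ≤ t → ‖Ψ t s‖ ≤ K * Real.exp (-γ * (t - s)))
    (ρ : ℝ) (hρ : 0 < ρ) :
    ∀ t₀ : ℝ, ∀ C : Set (Euc d), C.Nonempty → IsCompact C → ∀ ε > (0 : ℝ),
      ∃ T : ℝ, t₀ ≤ T ∧ ∀ t : ℝ, T ≤ t →
        reach d Ψ ρ t t₀ C ⊆ Metric.thickening ε (Afib d Ψ ρ t) := by
  intro t₀ C hCne hCc ε hε
  have hK0 : (0 : ℝ) < K := lt_of_lt_of_le one_pos hK
  obtain ⟨M, hM⟩ := hCc.isBounded.exists_norm_le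
  have hM0 : 0 ≤ M := (norm_nonneg _).trans (hM _ hCne.choose_spec)
  -- integrability of the exponential majorant
  have hgint : ∀ t : ℝ, IntegrableOn (fun s => K * Real.exp (-γ * (t - s))) (Iic t) := by
    intro t
    have heq : (fun s => K * Real.exp (-γ * (t - s)))
        = fun s => (K * Real.exp (-γ * t)) * Real.exp (γ * s) := by
      funext s
      rw [mul_assoc, ← Real.exp_add]
      congr 2
      ring
    rw [heq]
    exact (exp_mul_integrableOn_Iic hγ t).const_mul _
  -- measurability of the integrand
  have hmeas : ∀ (t : ℝ) (ξ : ℝ → Euc d), Measurable ξ →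
      Measurable (fun s => Ψ t s (ξ s)) := by
    intro t ξ hξ
    have h1 : Continuous fun s : ℝ => Ψ t s :=
      hΨc.comp (continuous_const.prodMk continuous_id)
    exact isBoundedBilinearMap_apply.continuous.measurable.comp
      (h1.measurable.prodMk hξ)
  -- integrability of the integrand on Iic t
  have hint : ∀ (t : ℝ) (ξ : ℝ → Euc d), Measurable ξ → (∀ s, ‖ξ s‖ ≤ 1) →
      IntegrableOn (fun s => Ψ t s (ξ s)) (Iic t) := by
    intro t ξ hξm hξ1
    refine Integrable.mono' (hgint t) ((hmeas t ξ hξm).aestronglyMeasurable) ?_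
    refine (ae_restrict_iff' measurableSet_Iic).2 (Filter.Eventually.of_forall fun s hs => ?_)
    calc ‖Ψ t s (ξ s)‖ ≤ ‖Ψ t s‖ * ‖ξ s‖ := (Ψ t s).le_opNorm _
      _ ≤ (K * Real.exp (-γ * (t - s))) * 1 :=
        mul_le_mul (hstab s t hs) (hξ1 s) (norm_nonneg _) (by positivity)
      _ = K * Real.exp (-γ * (t - s)) := mul_one _
  -- the tail constant J
  set J : ℝ := ∫ s in Iic t₀, K * Real.exp (-γ * (t₀ - s)) with hJdef
  have hJ0 : 0 ≤ J := setIntegral_nonneg measurableSet_Iic fun s _ => by positivity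
  set B : ℝ := K * M + ρ * J with hBdef
  have hB0 : 0 ≤ B := by positivity
  -- choose T
  have h1 : Filter.Tendsto (fun t : ℝ => γ * (t - t₀)) Filter.atTop Filter.atTop := by
    apply Filter.Tendsto.const_mul_atTop hγ
    exact Filter.tendsto_atTop_add_const_right _ (-t₀) Filter.tendsto_id
  have h2 : Filter.Tendsto (fun t : ℝ => Real.exp (-γ * (t - t₀)) * B)
      Filter.atTop (nhds 0) := by
    have h3 : Filter.Tendsto (fun t : ℝ => Real.exp (-γ * (t - t₀))) Filter.atTop (nhds 0) := by
      have h4 := Real.tendsto_exp_atBot.comp (Filter.tendsto_neg_atBot_iff.mpr h1)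
      refine h4.congr fun t => ?_
      simp [Function.comp, neg_mul]
    simpa using h3.mul_const B
  have hev : ∀ᶠ t in Filter.atTop,
      Real.exp (-γ * (t - t₀)) * B < ε ∧ t₀ ≤ t :=
    (h2.eventually_lt_const hε).and (Filter.eventually_ge_atTop t₀)
  obtain ⟨T₁, hT₁⟩ := Filter.eventually_atTop.mp hev
  refine ⟨max T₁ t₀, le_max_right _ _, fun t ht => ?_⟩
  obtain ⟨hlt, ht₀t⟩ := hT₁ t ((le_max_left _ _).trans ht)
  rintro y ⟨x₀, hx₀, ξ, ⟨hξm, hξ1⟩, rfl⟩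
  set f : ℝ → Euc d := fun s => Ψ t s (ξ s) with hfdef
  have hfi : IntegrableOn f (Iic t) := hint t ξ hξm hξ1
  set a : Euc d := ρ • ∫ s in Iic t, f s with hadef
  have ha : a ∈ Afib d Ψ ρ t := ⟨ξ, ⟨hξm, hξ1⟩, rfl⟩
  rw [Metric.mem_thickening_iff]
  refine ⟨a, ha, ?_⟩
  -- split the integral
  have hsplit : (∫ s in Iic t, f s)
      = (∫ s in Iic t₀, f s) + ∫ s in Icc t₀ t, f s := by
    rw [integral_Icc_eq_integral_Ioc,
      ← setIntegral_union (Iic_disjoint_Ioc le_rfl) measurableSet_Ioc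
        (hfi.mono_set (Iic_subset_Iic.2 ht₀t)) (hfi.mono_set Ioc_subset_Iic_self),
      Iic_union_Ioc_eq_Iic ht₀t]
  -- bound the tail integral
  have htail : ‖∫ s in Iic t₀, f s‖ ≤ Real.exp (-γ * (t - t₀)) * J := by
    have hb1 : ‖∫ s in Iic t₀, f s‖ ≤ ∫ s in Iic t₀, ‖f s‖ :=
      norm_integral_le_integral_norm _
    have hb2 : (∫ s in Iic t₀, ‖f s‖) ≤ ∫ s in Iic t₀, K * Real.exp (-γ * (t - s)) := by
      refine setIntegral_mono_on ((hfi.mono_set (Iic_subset_Iic.2 ht₀t)).norm)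
        ((hgint t).mono_set (Iic_subset_Iic.2 ht₀t)) measurableSet_Iic fun s hs => ?_
      calc ‖f s‖ ≤ ‖Ψ t s‖ * ‖ξ s‖ := (Ψ t s).le_opNorm _
        _ ≤ (K * Real.exp (-γ * (t - s))) * 1 :=
          mul_le_mul (hstab s t (le_trans hs ht₀t)) (hξ1 s) (norm_nonneg _) (by positivity)
        _ = K * Real.exp (-γ * (t - s)) := mul_one _
    have hb3 : (∫ s in Iic t₀, K * Real.exp (-γ * (t - s)))
        = Real.exp (-γ * (t - t₀)) * J := by
      rw [hJdef, ← integral_const_mul]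
      congr 1
      funext s
      rw [mul_left_comm, ← Real.exp_add]
      congr 2
      ring
    linarith
  -- compute the distance
  have hdist : dist (Ψ t t₀ x₀ + ρ • ∫ s in Icc t₀ t, f s) a
      = ‖Ψ t t₀ x₀ - ρ • ∫ s in Iic t₀, f s‖ := by
    rw [dist_eq_norm, hadef, hsplit, smul_add]
    congr 1
    abel
  rw [hdist]
  have hx₀n : ‖Ψ t t₀ x₀‖ ≤ (K * Real.exp (-γ * (t - t₀))) * M :=
    calc ‖Ψ t t₀ x₀‖ ≤ ‖Ψ t t₀‖ * ‖x₀‖ := (Ψ t t₀).le_opNorm _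
      _ ≤ (K * Real.exp (-γ * (t - t₀))) * M :=
        mul_le_mul (hstab t₀ t ht₀t) (hM _ hx₀) (norm_nonneg _) (by positivity)
  calc ‖Ψ t t₀ x₀ - ρ • ∫ s in Iic t₀, f s‖
      ≤ ‖Ψ t t₀ x₀‖ + ‖ρ • ∫ s in Iic t₀, f s‖ := norm_sub_le _ _
    _ = ‖Ψ t t₀ x₀‖ + ρ * ‖∫ s in Iic t₀, f s‖ := by
        rw [norm_smul, Real.norm_of_nonneg hρ.le]
    _ ≤ (K * Real.exp (-γ * (t - t₀))) * M + ρ * (Real.exp (-γ * (t - t₀)) * J) := by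
        gcongr
    _ = Real.exp (-γ * (t - t₀)) * B := by rw [hBdef]; ring
    _ < ε := hlt
end
end

section
/- Closedness of the attractor fibres: for every t ∈ ℝ, the set A t is closed in E (IsClosed (A t)); consequently, being also bounded, each fibre A t is compact. -/
open MeasureTheory Set Metric Pointwise
open scoped RealInnerProductSpace

noncomputable section

/-! The map `ξ ↦ ∫_{s ≤ t} Ψ t s (ξ s) ds` is a bounded operator on `L²` of the finite measure
`‖Ψ t s‖ ds` on `Iic t`, with kernel `Ψ t s / ‖Ψ t s‖`. The controls form a weakly compact subset
of this Hilbert space: they are the `ξ` with `⟪ξ, w⟫ ≤ ∫ ‖w‖` for every `w`, a bounded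
intersection of weakly closed half-spaces. Since `E` is finite-dimensional, the operator is weakly
continuous, so the fibre is compact, hence closed. -/

open scoped ENNReal

section WeakCompactness

variable {H F : Type*} [NormedAddCommGroup H] [InnerProductSpace ℝ H] [CompleteSpace H]
  [NormedAddCommGroup F] [NormedSpace ℝ F] [FiniteDimensional ℝ F]

open InnerProductSpace

theorem continuous_comp_toDual_symm (T : H →L[ℝ] F) :
    Continuous fun φ : WeakDual ℝ H ↦ T ((toDual ℝ H).symm (WeakDual.toStrongDual φ)) := by
  have hdual (f : StrongDual ℝ H) :
      Continuous fun φ : WeakDual ℝ H ↦ f ((toDual ℝ H).symm (WeakDual.toStrongDual φ)) := by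
    convert WeakDual.eval_continuous ((toDual ℝ H).symm f) using 2 with φ
    rw [← toDual_symm_apply, real_inner_comm, toDual_symm_apply]
    rfl
  let b := Module.finBasis ℝ F
  rw [← b.equivFunL.comp_continuous_iff]
  exact continuous_pi fun i ↦
    hdual ((ContinuousLinearMap.proj i).comp (b.equivFunL.toContinuousLinearMap.comp T))

/-- Via `toDual`, the set is a weak-* closed subset of a dual ball (Banach–Alaoglu), on which
`T` is weak-* continuous because `F` is finite-dimensional. -/
theorem isCompact_image_setOf_forall_inner_le (T : H →L[ℝ] F) {c : H → ℝ}
    (hc : Bornology.IsBounded {x : H | ∀ w, ⟪x, w⟫ ≤ c w}) :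
    IsCompact (T '' {x : H | ∀ w, ⟪x, w⟫ ≤ c w}) := by
  obtain ⟨R, hR⟩ := hc.subset_closedBall 0
  let S : Set (WeakDual ℝ H) :=
    WeakDual.toStrongDual ⁻¹' closedBall 0 R ∩ ⋂ w, {φ | φ w ≤ c w}
  have hS : IsCompact S :=
    (WeakDual.isCompact_closedBall 0 R).inter_right <|
      isClosed_iInter fun w ↦ isClosed_le (WeakDual.eval_continuous w) continuous_const
  convert hS.image (continuous_comp_toDual_symm T) using 1
  ext y
  constructor
  · rintro ⟨x, hx, rfl⟩
    refine ⟨StrongDual.toWeakDual (toDual ℝ H x), ⟨?_, mem_iInter.2 hx⟩, by simp⟩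
    simpa using hR hx
  · rintro ⟨φ, ⟨-, hφ⟩, rfl⟩
    refine ⟨_, fun w ↦ ?_, rfl⟩
    rw [toDual_symm_apply]
    exact mem_iInter.1 hφ w

end WeakCompactness

namespace MeasureTheory

variable {α E : Type*} [MeasurableSpace α] {μ : Measure α} [NormedAddCommGroup E]

theorem AEStronglyMeasurable.exists_measurable_norm_le_one_ae_eq [MeasurableSpace E]
    [BorelSpace E] {f : α → E} (hf : AEStronglyMeasurable f μ) (hf_le : ∀ᵐ a ∂μ, ‖f a‖ ≤ 1) :
    ∃ ξ : α → E, Measurable ξ ∧ (∀ a, ‖ξ a‖ ≤ 1) ∧ f =ᵐ[μ] ξ := by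
  obtain ⟨g, hg, hfg⟩ := hf
  have hA : MeasurableSet {a | ‖g a‖ ≤ 1} := measurableSet_le hg.norm.measurable measurable_const
  refine ⟨{a | ‖g a‖ ≤ 1}.indicator g, hg.measurable.indicator hA, fun a ↦ ?_, ?_⟩
  · rw [indicator_apply]
    split_ifs with ha
    exacts [ha, by simp]
  · filter_upwards [hfg, hf_le] with a hfa ha
    rw [hfa] at ha ⊢
    rw [indicator_of_mem (show a ∈ {a | ‖g a‖ ≤ 1} from ha)]

variable [IsFiniteMeasure μ]

theorem Lp.isBounded_setOf_ae_norm_le_one {p : ℝ≥0∞} [Fact (1 ≤ p)] :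
    Bornology.IsBounded {ζ : Lp E p μ | ∀ᵐ a ∂μ, ‖ζ a‖ ≤ 1} :=
  isBounded_iff_forall_norm_le.2 ⟨_, fun _ hζ ↦ Lp.norm_le_of_ae_bound zero_le_one hζ⟩

theorem Lp.integrable_norm {p : ℝ≥0∞} [Fact (1 ≤ p)] (w : Lp E p μ) :
    Integrable (fun a ↦ ‖w a‖) μ :=
  ((Lp.memLp w).integrable Fact.out).norm

variable [InnerProductSpace ℝ E]

theorem L2.inner_le_integral_norm {ζ : Lp E 2 μ} (hζ : ∀ᵐ a ∂μ, ‖ζ a‖ ≤ 1)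
    (w : Lp E 2 μ) : ⟪ζ, w⟫ ≤ ∫ a, ‖w a‖ ∂μ := by
  rw [L2.inner_def]
  refine integral_mono_ae (L2.integrable_inner ζ w) (Lp.integrable_norm w) ?_
  filter_upwards [hζ] with a ha
  calc ⟪ζ a, w a⟫ ≤ ‖ζ a‖ * ‖w a‖ := real_inner_le_norm _ _
    _ ≤ ‖w a‖ := mul_le_of_le_one_left (norm_nonneg _) ha

/-- Testing against `ζ` restricted to `{1 < ‖ζ‖}` gives `∫_{1 < ‖ζ‖} ‖ζ‖ (‖ζ‖ - 1) ≤ 0`. -/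
theorem L2.ae_norm_le_one_of_forall_inner_le {ζ : Lp E 2 μ}
    (hζ : ∀ w : Lp E 2 μ, ⟪ζ, w⟫ ≤ ∫ a, ‖w a‖ ∂μ) : ∀ᵐ a ∂μ, ‖ζ a‖ ≤ 1 := by
  obtain ⟨g, hg, hζg⟩ := Lp.aestronglyMeasurable ζ
  set A : Set α := {a | 1 < ‖g a‖}
  have hA : MeasurableSet A := measurableSet_lt measurable_const hg.norm.measurable
  have hw := (Lp.memLp ζ).indicator hA
  set h : α → ℝ := fun a ↦ ⟪ζ a, hw.toLp _ a⟫ - ‖hw.toLp _ a‖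
  have h_int : Integrable h μ := (L2.integrable_inner _ _).sub (Lp.integrable_norm _)
  have h_le : ∫ a, h a ∂μ ≤ 0 := by
    rw [integral_sub (L2.integrable_inner _ _) (Lp.integrable_norm _), ← L2.inner_def]
    linarith [hζ (hw.toLp _)]
  have h_eq : h =ᵐ[μ] A.indicator fun a ↦ ‖g a‖ * (‖g a‖ - 1) := by
    filter_upwards [hζg, hw.coeFn_toLp] with a hζa hwa
    by_cases ha : a ∈ A
    · simp only [h, hwa, hζa, indicator_of_mem ha, real_inner_self_eq_norm_sq]
      ring
    · simp [h, hwa, indicator_of_notMem ha]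
  have h_nonneg : 0 ≤ᵐ[μ] h := by
    filter_upwards [h_eq] with a ha
    rw [ha]
    exact indicator_nonneg (fun b (hb : 1 < ‖g b‖) ↦ by nlinarith) a
  have h_zero : h =ᵐ[μ] 0 := (integral_eq_zero_iff_of_nonneg_ae h_nonneg h_int).1
    (le_antisymm h_le (integral_nonneg_of_ae h_nonneg))
  filter_upwards [h_zero, h_eq, hζg] with a h0 ha hζa
  rw [hζa]
  by_contra! hlt
  rw [h0, Pi.zero_apply, indicator_of_mem (show a ∈ A from hlt)] at ha
  nlinarith

theorem L2.setOf_ae_norm_le_one_eq :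
    {ζ : Lp E 2 μ | ∀ᵐ a ∂μ, ‖ζ a‖ ≤ 1} = {ζ | ∀ w : Lp E 2 μ, ⟪ζ, w⟫ ≤ ∫ a, ‖w a‖ ∂μ} :=
  Set.ext fun _ ↦ ⟨L2.inner_le_integral_norm, L2.ae_norm_le_one_of_forall_inner_le⟩

end MeasureTheory

section IntegralOperator

variable {α E F : Type*} [MeasurableSpace α] {μ : Measure α}
  [NormedAddCommGroup E] [InnerProductSpace ℝ E] [CompleteSpace E] [SecondCountableTopology E]
  [MeasurableSpace E] [BorelSpace E]
  [NormedAddCommGroup F] [NormedSpace ℝ F] [FiniteDimensional ℝ F]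

theorem isCompact_image_integral_apply_of_memLp [IsFiniteMeasure μ] {k : α → E →L[ℝ] F}
    (hk : MemLp k 2 μ) :
    IsCompact ((fun ξ ↦ ∫ a, k a (ξ a) ∂μ) '' {ξ : α → E | Measurable ξ ∧ ∀ a, ‖ξ a‖ ≤ 1}) := by
  let T : Lp E 2 μ →L[ℝ] F :=
    (ContinuousLinearMap.id ℝ (E →L[ℝ] F)).lpPairing μ 2 2 (hk.toLp k)
  have hT {ξ : α → E} {ζ : Lp E 2 μ} (hζ : ζ =ᵐ[μ] ξ) : T ζ = ∫ a, k a (ξ a) ∂μ := by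
    rw [ContinuousLinearMap.lpPairing_eq_integral]
    refine integral_congr_ae ?_
    filter_upwards [hk.coeFn_toLp, hζ] with a hka hζa
    simp [hka, hζa]
  have himage : (fun ξ ↦ ∫ a, k a (ξ a) ∂μ) '' {ξ : α → E | Measurable ξ ∧ ∀ a, ‖ξ a‖ ≤ 1} =
      T '' {ζ : Lp E 2 μ | ∀ᵐ a ∂μ, ‖ζ a‖ ≤ 1} := by
    ext x
    constructor
    · rintro ⟨ξ, ⟨hξ, hξ_le⟩, rfl⟩
      have hξ2 : MemLp ξ 2 μ := .of_bound hξ.aestronglyMeasurable 1 (.of_forall hξ_le)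
      refine ⟨hξ2.toLp ξ, ?_, hT hξ2.coeFn_toLp⟩
      filter_upwards [hξ2.coeFn_toLp] with a ha
      exact ha ▸ hξ_le a
    · rintro ⟨ζ, hζ, rfl⟩
      obtain ⟨ξ, hξ, hξ_le, hζξ⟩ :=
        (Lp.aestronglyMeasurable ζ).exists_measurable_norm_le_one_ae_eq hζ
      exact ⟨ξ, ⟨hξ, hξ_le⟩, (hT hζξ).symm⟩
  have hbdd : Bornology.IsBounded {ζ : Lp E 2 μ | ∀ w, ⟪ζ, w⟫ ≤ ∫ a, ‖w a‖ ∂μ} :=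
    L2.setOf_ae_norm_le_one_eq (E := E) (μ := μ) ▸ Lp.isBounded_setOf_ae_norm_le_one
  rw [himage, L2.setOf_ae_norm_le_one_eq]
  exact isCompact_image_setOf_forall_inner_le T hbdd

/-- Reweighting `μ` by `‖k‖` makes the measure finite and the kernel `k / ‖k‖` bounded. -/
theorem isCompact_image_integral_apply {k : α → E →L[ℝ] F} (hk : Integrable k μ) :
    IsCompact ((fun ξ ↦ ∫ a, k a (ξ a) ∂μ) '' {ξ : α → E | Measurable ξ ∧ ∀ a, ‖ξ a‖ ≤ 1}) := by
  let ν := μ.withDensity fun a ↦ (‖k a‖₊ : ℝ≥0∞)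
  have : IsFiniteMeasure ν :=
    isFiniteMeasure_withDensity (by simpa only [enorm_eq_nnnorm] using hk.2.ne)
  have hk' : MemLp (fun a ↦ ‖k a‖⁻¹ • k a) 2 ν := by
    have hmeas := hk.1.norm.aemeasurable.inv.aestronglyMeasurable.smul hk.1
    refine .of_bound (hmeas.mono_ac (withDensity_absolutelyContinuous _ _)) 1
      (.of_forall fun a ↦ ?_)
    rw [norm_smul, norm_inv, norm_norm]
    exact inv_mul_le_one
  have hν (ξ : α → E) : ∫ a, (‖k a‖⁻¹ • k a) (ξ a) ∂ν = ∫ a, k a (ξ a) ∂μ := by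
    rw [integral_withDensity_eq_integral_smul₀ hk.1.nnnorm.aemeasurable]
    congr 1 with a
    by_cases ha : k a = 0
    · simp [ha]
    · simp [NNReal.smul_def, smul_inv_smul₀ (norm_ne_zero_iff.2 ha)]
  simpa only [hν] using isCompact_image_integral_apply_of_memLp hk'

end IntegralOperator

theorem integrableOn_Iic_of_norm_le_mul_exp {G : Type*} [NormedAddCommGroup G] {f : ℝ → G}
    (hf : Continuous f) {K γ t : ℝ} (hγ : 0 < γ)
    (hle : ∀ s ≤ t, ‖f s‖ ≤ K * Real.exp (-γ * (t - s))) : IntegrableOn f (Iic t) := by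
  refine Integrable.mono' ((integrableOn_exp_mul_Iic hγ t).const_mul (K * Real.exp (-γ * t)))
    hf.aestronglyMeasurable ?_
  filter_upwards [ae_restrict_mem measurableSet_Iic] with s hs
  calc ‖f s‖ ≤ K * Real.exp (-γ * (t - s)) := hle s hs
    _ = K * Real.exp (-γ * t) * Real.exp (γ * s) := by
      rw [mul_assoc, ← Real.exp_add]
      ring_nf

theorem attractor_closed_compact_general
    (d : ℕ)
    (L : ℝ → (Euc d →L[ℝ] Euc d))
    (Ψ : ℝ → ℝ → (Euc d →L[ℝ] Euc d))
    (hΨc : Continuous fun p : ℝ × ℝ => Ψ p.1 p.2)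
    (K γ : ℝ) (hγ : 0 < γ)
    (hstab : ∀ s t : ℝ, s ≤ t → ‖Ψ t s‖ ≤ K * Real.exp (-γ * (t - s)))
    (ρ : ℝ) :
    ∀ t : ℝ, IsClosed (Afib d Ψ ρ t) ∧ IsCompact (Afib d Ψ ρ t) := by
  intro t
  have hΨ : IntegrableOn (Ψ t) (Iic t) :=
    integrableOn_Iic_of_norm_le_mul_exp (hΨc.comp (Continuous.prodMk_right t)) hγ
      fun s hs ↦ hstab s t hs
  have hA : Afib d Ψ ρ t = ρ • (fun ξ ↦ ∫ s in Iic t, Ψ t s (ξ s)) '' ctrlSet d := by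
    ext x
    simp [Afib, ctrlSet, mem_smul_set, eq_comm]
  have hcompact : IsCompact (Afib d Ψ ρ t) := by
    rw [hA, ← image_smul]
    exact (isCompact_image_integral_apply hΨ).image (continuous_const_smul ρ)
  exact ⟨hcompact.isClosed, hcompact⟩

/-- Closedness (and hence compactness) of the attractor fibres. -/
theorem attractor_closed_compact
    (d : ℕ) (hd : 1 ≤ d)
    (L : ℝ → (Euc d →L[ℝ] Euc d)) (hL : Continuous L)
    (Ψ : ℝ → ℝ → (Euc d →L[ℝ] Euc d))
    (hΨc : Continuous fun p : ℝ × ℝ => Ψ p.1 p.2)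
    (hΨid : ∀ t : ℝ, Ψ t t = ContinuousLinearMap.id ℝ (Euc d))
    (hΨcoc : ∀ t s r : ℝ, (Ψ t s).comp (Ψ s r) = Ψ t r)
    (hΨd : ∀ (s : ℝ) (x : Euc d) (t : ℝ), HasDerivAt (fun τ => Ψ τ s x) (L t (Ψ t s x)) t)
    (K γ : ℝ) (hK : 1 ≤ K) (hγ : 0 < γ)
    (hstab : ∀ s t : ℝ, s ≤ t → ‖Ψ t s‖ ≤ K * Real.exp (-γ * (t - s)))
    (ρ : ℝ) (hρ : 0 < ρ) :
    ∀ t : ℝ, IsClosed (Afib d Ψ ρ t) ∧ IsCompact (Afib d Ψ ρ t) :=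
  attractor_closed_compact_general d L Ψ hΨc K γ hγ hstab ρ
end
end

section
/- Support function formula and attainment of the maximum: for every t ∈ ℝ and every n ∈ E with n ≠ 0, the control ξ̄ defined by ξ̄ s = ‖(Ψ t s).adjoint n‖⁻¹ • (Ψ t s).adjoint n (well defined since each Ψ t s is invertible, so (Ψ t s).adjoint n ≠ 0) belongs to 𝒰, the point x̄ = ρ • ∫ s in Set.Iic t, Ψ t s (ξ̄ s) belongs to A t, and ⟪n, x̄⟫ = ρ * ∫ s in Set.Iic t, ‖(Ψ t s).adjoint n‖, which equals the supremum of ⟪n, x⟫ over x ∈ A t; i.e., IsGreatest {r : ℝ | ∃ x ∈ A t, r = ⟪n, x⟫} (ρ * ∫ s in Set.Iic t, ‖(Ψ t s).adjoint n‖). -/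
open MeasureTheory Set Metric Pointwise
open scoped RealInnerProductSpace

noncomputable section

lemma expIic (γ t : ℝ) (hγ : 0 < γ) :
    IntegrableOn (fun s => Real.exp (-γ * (t - s))) (Iic t) := by
  have h1 : Integrable ((Ioi (-t)).indicator fun x => Real.exp (-γ * x)) :=
    (integrable_indicator_iff measurableSet_Ioi).2 (exp_neg_integrableOn_Ioi _ hγ)
  have h2 := h1.comp_neg
  have h3 : Integrable ((Iio t).indicator fun s => Real.exp (γ * s)) := by
    convert h2 using 1
    ext x
    by_cases hx : x < t
    · rw [Set.indicator_of_mem (show x ∈ Iio t from hx),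
        Set.indicator_of_mem (show -x ∈ Ioi (-t) by simpa using hx)]
      ring_nf
    · rw [Set.indicator_of_notMem (show x ∉ Iio t from hx),
        Set.indicator_of_notMem (show -x ∉ Ioi (-t) by simpa using hx)]
  have h4 : IntegrableOn (fun s => Real.exp (γ * s)) (Iio t) :=
    (integrable_indicator_iff measurableSet_Iio).1 h3
  have h5 : IntegrableOn (fun s => Real.exp (γ * s)) (Iic t) := by
    rwa [integrableOn_Iic_iff_integrableOn_Iio]
  have h6 := h5.const_mul (Real.exp (-γ * t))
  refine IntegrableOn.congr_fun h6 (fun s _ => ?_) measurableSet_Iic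
  rw [← Real.exp_add]; ring_nf

/-- Support function formula for the attractor fibres and attainment of the maximum. -/
theorem attractor_support_function
    (d : ℕ) (hd : 1 ≤ d)
    (L : ℝ → (Euc d →L[ℝ] Euc d)) (hL : Continuous L)
    (Ψ : ℝ → ℝ → (Euc d →L[ℝ] Euc d))
    (hΨc : Continuous fun p : ℝ × ℝ => Ψ p.1 p.2)
    (hΨid : ∀ t : ℝ, Ψ t t = ContinuousLinearMap.id ℝ (Euc d))
    (hΨcoc : ∀ t s r : ℝ, (Ψ t s).comp (Ψ s r) = Ψ t r)
    (hΨd : ∀ (s : ℝ) (x : Euc d) (t : ℝ), HasDerivAt (fun τ => Ψ τ s x) (L t (Ψ t s x)) t)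
    (K γ : ℝ) (hK : 1 ≤ K) (hγ : 0 < γ)
    (hstab : ∀ s t : ℝ, s ≤ t → ‖Ψ t s‖ ≤ K * Real.exp (-γ * (t - s)))
    (ρ : ℝ) (hρ : 0 < ρ) :
    ∀ t : ℝ, ∀ n : Euc d, n ≠ 0 →
      (fun s : ℝ => ‖ContinuousLinearMap.adjoint (Ψ t s) n‖⁻¹ •
          ContinuousLinearMap.adjoint (Ψ t s) n) ∈ ctrlSet d ∧
      (ρ • ∫ s in Set.Iic t, Ψ t s (‖ContinuousLinearMap.adjoint (Ψ t s) n‖⁻¹ •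
          ContinuousLinearMap.adjoint (Ψ t s) n)) ∈ Afib d Ψ ρ t ∧
      ⟪n, ρ • ∫ s in Set.Iic t, Ψ t s (‖ContinuousLinearMap.adjoint (Ψ t s) n‖⁻¹ •
          ContinuousLinearMap.adjoint (Ψ t s) n)⟫
        = ρ * ∫ s in Set.Iic t, ‖ContinuousLinearMap.adjoint (Ψ t s) n‖ ∧
      IsGreatest {r : ℝ | ∃ x ∈ Afib d Ψ ρ t, r = ⟪n, x⟫}
        (ρ * ∫ s in Set.Iic t, ‖ContinuousLinearMap.adjoint (Ψ t s) n‖) := by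
  intro t n hn
  set F : ℝ → Euc d := fun s => ContinuousLinearMap.adjoint (Ψ t s) n with hF
  have hΨt : Continuous fun s => Ψ t s := hΨc.comp (Continuous.prodMk_right t)
  have hadjc : Continuous fun s : ℝ => ContinuousLinearMap.adjoint (Ψ t s) :=
    (ContinuousLinearMap.adjoint (𝕜 := ℝ) (E := Euc d) (F := Euc d)).continuous.comp hΨt
  have hFc : Continuous F :=
    (ContinuousLinearMap.apply ℝ (Euc d) n).continuous.comp hadjc
  have hsurj : ∀ s, Function.Surjective (Ψ t s) := by
    intro s y
    refine ⟨Ψ s t y, ?_⟩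
    have h := hΨcoc t s t
    rw [hΨid t] at h
    exact DFunLike.congr_fun h y
  have hFne : ∀ s, F s ≠ 0 := by
    intro s h
    apply hn
    obtain ⟨x, hx⟩ := hsurj s n
    have h2 : ⟪(ContinuousLinearMap.adjoint (Ψ t s)) n, x⟫ = ⟪n, n⟫ := by
      rw [ContinuousLinearMap.adjoint_inner_left, hx]
    have h3 : ⟪n, n⟫ = 0 := by
      rw [← h2, show (ContinuousLinearMap.adjoint (Ψ t s)) n = 0 from h, inner_zero_left]
    exact inner_self_eq_zero.1 h3
  have hFpos : ∀ s, 0 < ‖F s‖ := fun s => norm_pos_iff.2 (hFne s)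
  set ξ₀ : ℝ → Euc d := fun s => ‖F s‖⁻¹ • F s with hξ₀
  have hξ₀c : Continuous ξ₀ := (hFc.norm.inv₀ fun s => (hFpos s).ne').smul hFc
  have hξ₀b : ∀ s, ‖ξ₀ s‖ ≤ 1 := by
    intro s
    rw [hξ₀]
    simp only [norm_smul, norm_inv, norm_norm]
    rw [inv_mul_cancel₀ (hFpos s).ne']
  have hξ₀mem : ξ₀ ∈ ctrlSet d := ⟨hξ₀c.measurable, hξ₀b⟩
  -- integrability
  have hexp : IntegrableOn (fun s => K * Real.exp (-γ * (t - s))) (Iic t) :=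
    (expIic γ t hγ).const_mul K
  have hInt : ∀ ξ : ℝ → Euc d, Measurable ξ → (∀ s, ‖ξ s‖ ≤ 1) →
      IntegrableOn (fun s => Ψ t s (ξ s)) (Iic t) := by
    intro ξ hm hb
    have hmeas : Measurable fun s => Ψ t s (ξ s) := by
      have hc : Continuous fun p : (Euc d →L[ℝ] Euc d) × Euc d => p.1 p.2 :=
        isBoundedBilinearMap_apply.continuous
      exact hc.measurable.comp (hΨt.measurable.prodMk hm)
    refine Integrable.mono' hexp hmeas.aestronglyMeasurable ?_
    refine (ae_restrict_iff' measurableSet_Iic).2 (ae_of_all _ fun s hs => ?_)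
    calc ‖Ψ t s (ξ s)‖ ≤ ‖Ψ t s‖ * ‖ξ s‖ := (Ψ t s).le_opNorm _
      _ ≤ ‖Ψ t s‖ * 1 := mul_le_mul_of_nonneg_left (hb s) (norm_nonneg _)
      _ = ‖Ψ t s‖ := mul_one _
      _ ≤ K * Real.exp (-γ * (t - s)) := hstab s t hs
  have hnormInt : IntegrableOn (fun s => ‖F s‖) (Iic t) := by
    refine Integrable.mono' (hexp.mul_const ‖n‖) hFc.norm.aestronglyMeasurable ?_
    refine (ae_restrict_iff' measurableSet_Iic).2 (ae_of_all _ fun s hs => ?_)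
    rw [Real.norm_eq_abs, abs_of_nonneg (norm_nonneg _)]
    calc ‖F s‖ ≤ ‖ContinuousLinearMap.adjoint (Ψ t s)‖ * ‖n‖ :=
          (ContinuousLinearMap.adjoint (Ψ t s)).le_opNorm n
      _ = ‖Ψ t s‖ * ‖n‖ := by rw [LinearIsometryEquiv.norm_map]
      _ ≤ (K * Real.exp (-γ * (t - s))) * ‖n‖ :=
          mul_le_mul_of_nonneg_right (hstab s t hs) (norm_nonneg _)
  -- key identity
  have key : ∀ ξ : ℝ → Euc d, Measurable ξ → (∀ s, ‖ξ s‖ ≤ 1) →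
      ⟪n, ρ • ∫ s in Iic t, Ψ t s (ξ s)⟫ = ρ * ∫ s in Iic t, ⟪F s, ξ s⟫ := by
    intro ξ hm hb
    rw [real_inner_smul_right]
    congr 1
    rw [← integral_inner (hInt ξ hm hb) n]
    refine integral_congr_ae (ae_of_all _ fun s => ?_)
    exact (ContinuousLinearMap.adjoint_inner_left (Ψ t s) (ξ s) n).symm
  have key₀ : ⟪n, ρ • ∫ s in Iic t, Ψ t s (ξ₀ s)⟫
      = ρ * ∫ s in Iic t, ‖F s‖ := by
    rw [key ξ₀ hξ₀c.measurable hξ₀b]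
    congr 1
    refine integral_congr_ae (ae_of_all _ fun s => ?_)
    rw [hξ₀]
    simp only [real_inner_smul_right, real_inner_self_eq_norm_mul_norm]
    rw [← mul_assoc, inv_mul_cancel₀ (hFpos s).ne', one_mul]
  refine ⟨hξ₀mem, ⟨ξ₀, hξ₀mem, rfl⟩, key₀, ⟨⟨_, ⟨ξ₀, hξ₀mem, rfl⟩, key₀.symm⟩, ?_⟩⟩
  rintro r ⟨x, ⟨ξ, ⟨hm, hb⟩, rfl⟩, rfl⟩
  rw [key ξ hm hb]
  have hIξ : IntegrableOn (fun s => ⟪F s, ξ s⟫) (Iic t) := by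
    refine ((hInt ξ hm hb).const_inner n).congr ?_
    refine ae_of_all _ fun s => ?_
    exact (ContinuousLinearMap.adjoint_inner_left (Ψ t s) (ξ s) n).symm
  refine mul_le_mul_of_nonneg_left ?_ hρ.le
  refine setIntegral_mono_on hIξ hnormInt measurableSet_Iic fun s hs => ?_
  calc ⟪F s, ξ s⟫ ≤ ‖F s‖ * ‖ξ s‖ := real_inner_le_norm _ _
    _ ≤ ‖F s‖ * 1 := mul_le_mul_of_nonneg_left (hb s) (norm_nonneg _)
    _ = ‖F s‖ := mul_one _
end
end

section
/- C¹-regularity of the attractor boundary (uniqueness of the outward unit normal): for every t ∈ ℝ and every p ∈ frontier (A t), there exists exactly one n ∈ E with ‖n‖ = 1 such that ⟪n, y⟫ ≤ ⟪n, p⟫ for all y ∈ A t; i.e., each boundary point of the attractor fibre admits a unique supporting unit normal. -/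
open MeasureTheory Set Metric Pointwise
open scoped RealInnerProductSpace

noncomputable section

/-!
The fibre `A = Afib d Ψ ρ t` is convex and contains a ball around `0` (steer with controls
supported on `[t - 1, t]`), so Hahn–Banach gives a supporting unit normal at every boundary point.
Its support function (`attractorSupport`) is `h n = ρ ∫_{s ≤ t} ‖Ψ(t,s)* n‖`, attained by
the control `ξ s = Ψ(t,s)* n / ‖Ψ(t,s)* n‖`, which is admissible because `Ψ(t,s)` is invertible.
If unit normals `n₁, n₂` both support `A` at `p`, then
`h (n₁ + n₂) ≥ ⟪n₁ + n₂, p⟫ = h n₁ + h n₂`, so the triangle inequality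
`‖Ψ(t,s)* (n₁ + n₂)‖ ≤ ‖Ψ(t,s)* n₁‖ + ‖Ψ(t,s)* n₂‖` is an equality for almost every `s ≤ t`,
hence by continuity at `s = t`, where `Ψ(t,t)* = id`. Equality in the triangle inequality for
unit vectors forces `n₁ = n₂`.
-/

open scoped InnerProduct

section SupportingNormal

variable {E : Type*} [NormedAddCommGroup E] [InnerProductSpace ℝ E]

theorem Convex.exists_unit_normal_of_notMem_interior [CompleteSpace E] {A : Set E}
    (hA : Convex ℝ A) (hint : (interior A).Nonempty) {p : E} (hp : p ∉ interior A) :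
    ∃ n : E, ‖n‖ = 1 ∧ ∀ y ∈ A, ⟪n, y⟫ ≤ ⟪n, p⟫ := by
  obtain ⟨f, u, hf, hfA, hfp⟩ := geometric_hahn_banach_of_nonempty_interior hA
    (convex_singleton p) (disjoint_singleton_right.2 hp) hint (singleton_nonempty p)
  set n := (InnerProductSpace.toDual ℝ E).symm f
  have hn : n ≠ 0 := by simpa [n] using hf
  refine ⟨‖n‖⁻¹ • n, by simp [norm_smul, hn], fun y hy => ?_⟩
  simp only [real_inner_smul_left, n, InnerProductSpace.toDual_symm_apply]
  gcongr
  exact (hfA y hy).trans (hfp p rfl)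

variable {A : Set E} {h : E → ℝ} {p : E}

theorem inner_le_of_mem_closure {n : E} {c : ℝ} (hle : ∀ y ∈ A, ⟪n, y⟫ ≤ c)
    (hp : p ∈ closure A) : ⟪n, p⟫ ≤ c :=
  closure_minimal (t := {z | ⟪n, z⟫ ≤ c}) hle
    (isClosed_le (continuous_const.inner continuous_id) continuous_const) hp

theorem inner_eq_of_supporting (hle : ∀ n, ∀ y ∈ A, ⟪n, y⟫ ≤ h n)
    (hatt : ∀ n ≠ 0, ∃ y ∈ A, ⟪n, y⟫ = h n) (hp : p ∈ closure A) {n : E} (hn : n ≠ 0)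
    (hsupp : ∀ y ∈ A, ⟪n, y⟫ ≤ ⟪n, p⟫) : ⟪n, p⟫ = h n := by
  obtain ⟨y, hy, hyn⟩ := hatt n hn
  exact le_antisymm (inner_le_of_mem_closure (hle n) hp) (hyn ▸ hsupp y hy)

theorem eq_of_supporting_unit_normals (hle : ∀ n, ∀ y ∈ A, ⟪n, y⟫ ≤ h n)
    (hatt : ∀ n ≠ 0, ∃ y ∈ A, ⟪n, y⟫ = h n)
    (hstrict : ∀ a b, h a + h b ≤ h (a + b) → ‖a + b‖ = ‖a‖ + ‖b‖)
    (hp : p ∈ closure A) {n₁ n₂ : E} (hn₁ : ‖n₁‖ = 1) (hn₂ : ‖n₂‖ = 1)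
    (hs₁ : ∀ y ∈ A, ⟪n₁, y⟫ ≤ ⟪n₁, p⟫) (hs₂ : ∀ y ∈ A, ⟪n₂, y⟫ ≤ ⟪n₂, p⟫) : n₁ = n₂ := by
  have hne : ∀ {n : E}, ‖n‖ = 1 → n ≠ 0 := fun hn h0 => by simp [h0] at hn
  refine eq_of_norm_eq_of_norm_add_eq (hn₁.trans hn₂.symm) (hstrict _ _ ?_)
  rw [← inner_eq_of_supporting hle hatt hp (hne hn₁) hs₁,
    ← inner_eq_of_supporting hle hatt hp (hne hn₂) hs₂, ← inner_add_left]
  exact inner_le_of_mem_closure (hle _) hp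

end SupportingNormal

theorem Continuous.apply_eq_zero_of_setIntegral_Iic_nonpos {g : ℝ → ℝ} {t : ℝ}
    (hg : Continuous g) (hg0 : 0 ≤ g) (hint : IntegrableOn g (Iic t))
    (h : ∫ s in Iic t, g s ≤ 0) : g t = 0 := by
  have hae := (integral_eq_zero_iff_of_nonneg hg0 hint).1 (h.antisymm (integral_nonneg hg0))
  exact Measure.eqOn_of_ae_eq hae hg.continuousOn continuousOn_const
    (by rw [interior_Iic, closure_Iio]) (mem_Iic.2 le_rfl)

section Flow

variable {E : Type*} [NormedAddCommGroup E] [NormedSpace ℝ E] {Ψ : ℝ → ℝ → (E →L[ℝ] E)}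
  {K γ t : ℝ}

theorem integrableOn_Iic_of_norm_le_flow
    (hstab : ∀ s ≤ t, ‖Ψ t s‖ ≤ K * Real.exp (-γ * (t - s))) (hγ : 0 < γ)
    {F : Type*} [NormedAddCommGroup F] {f : ℝ → F}
    (hf : AEStronglyMeasurable f (volume.restrict (Iic t))) {c : ℝ} (hc : 0 ≤ c)
    (hfle : ∀ s ≤ t, ‖f s‖ ≤ ‖Ψ t s‖ * c) : IntegrableOn f (Iic t) := by
  have hexp : IntegrableOn (fun s => K * Real.exp (-γ * (t - s)) * c) (Iic t) := by
    refine IntegrableOn.congr_fun (((integrableOn_exp_mul_Iic hγ t).const_mul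
      (K * Real.exp (-γ * t))).mul_const c) (fun s _ => ?_) measurableSet_Iic
    simp only [mul_assoc, ← Real.exp_add]
    ring_nf
  refine hexp.mono' hf ((ae_restrict_mem measurableSet_Iic).mono fun s hs => ?_)
  exact (hfle s hs).trans (mul_le_mul_of_nonneg_right (hstab s hs) hc)

theorem flow_apply_flow (hΨid : ∀ t, Ψ t t = ContinuousLinearMap.id ℝ E)
    (hΨcoc : ∀ t s r, (Ψ t s).comp (Ψ s r) = Ψ t r) (t s : ℝ) (x : E) :
    Ψ t s (Ψ s t x) = x := by
  rw [← ContinuousLinearMap.comp_apply, hΨcoc, hΨid, ContinuousLinearMap.id_apply]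

end Flow

section AdjointFlow

open ContinuousLinearMap (adjoint adjoint_inner_left)

variable {E : Type*} [NormedAddCommGroup E] [InnerProductSpace ℝ E] [CompleteSpace E]
  {Ψ : ℝ → ℝ → (E →L[ℝ] E)} {t : ℝ}

theorem adjoint_flow_apply_ne_zero (hΨid : ∀ t, Ψ t t = ContinuousLinearMap.id ℝ E)
    (hΨcoc : ∀ t s r, (Ψ t s).comp (Ψ s r) = Ψ t r) (t s : ℝ) {n : E} (hn : n ≠ 0) :
    adjoint (Ψ t s) n ≠ 0 := by
  intro h0
  have := adjoint_inner_left (Ψ t s) (Ψ s t n) n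
  rw [flow_apply_flow hΨid hΨcoc, h0, inner_zero_left] at this
  exact hn (inner_self_eq_zero.mp this.symm)

theorem continuous_adjoint_flow_apply (hΨ : Continuous (Ψ t)) (n : E) :
    Continuous fun s => adjoint (Ψ t s) n :=
  (adjoint.continuous.comp hΨ).clm_apply continuous_const

end AdjointFlow

section Attractor

open ContinuousLinearMap (adjoint adjoint_inner_left)

variable {d : ℕ} {Ψ : ℝ → ℝ → (Euc d →L[ℝ] Euc d)} {K γ ρ t : ℝ}

def attractorSupport (Ψ : ℝ → ℝ → (Euc d →L[ℝ] Euc d)) (ρ t : ℝ) (n : Euc d) : ℝ :=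
  ρ * ∫ s in Iic t, ‖adjoint (Ψ t s) n‖

theorem integrableOn_flow_apply_control (hΨ : Continuous (Ψ t))
    (hstab : ∀ s ≤ t, ‖Ψ t s‖ ≤ K * Real.exp (-γ * (t - s))) (hγ : 0 < γ)
    {ξ : ℝ → Euc d} (hξ : ξ ∈ ctrlSet d) : IntegrableOn (fun s => Ψ t s (ξ s)) (Iic t) := by
  have hξm := hξ.1
  exact integrableOn_Iic_of_norm_le_flow hstab hγ
    (by fun_prop : Measurable _).aestronglyMeasurable zero_le_one
    fun s _ => (Ψ t s).le_opNorm_of_le (hξ.2 s)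

theorem integrableOn_norm_adjoint_flow_apply (hΨ : Continuous (Ψ t))
    (hstab : ∀ s ≤ t, ‖Ψ t s‖ ≤ K * Real.exp (-γ * (t - s))) (hγ : 0 < γ) (n : Euc d) :
    IntegrableOn (fun s => ‖adjoint (Ψ t s) n‖) (Iic t) :=
  integrableOn_Iic_of_norm_le_flow hstab hγ
    (continuous_adjoint_flow_apply hΨ n).norm.aestronglyMeasurable (norm_nonneg n)
    fun s _ => by
      rw [norm_norm, ← adjoint.norm_map (Ψ t s)]
      exact ContinuousLinearMap.le_opNorm _ _

theorem inner_le_attractorSupport (hΨ : Continuous (Ψ t))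
    (hstab : ∀ s ≤ t, ‖Ψ t s‖ ≤ K * Real.exp (-γ * (t - s))) (hγ : 0 < γ) (hρ : 0 ≤ ρ)
    (n : Euc d) {y : Euc d} (hy : y ∈ Afib d Ψ ρ t) : ⟪n, y⟫ ≤ attractorSupport Ψ ρ t n := by
  obtain ⟨ξ, hξ, rfl⟩ := hy
  have hint := integrableOn_flow_apply_control hΨ hstab hγ hξ
  rw [real_inner_smul_right, ← integral_inner hint n]
  refine mul_le_mul_of_nonneg_left (setIntegral_mono_on ((innerSL ℝ n).integrable_comp hint)
    (integrableOn_norm_adjoint_flow_apply hΨ hstab hγ n) measurableSet_Iic fun s _ => ?_) hρ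
  rw [← adjoint_inner_left]
  exact (real_inner_le_norm _ _).trans (mul_le_of_le_one_right (norm_nonneg _) (hξ.2 s))

theorem exists_inner_eq_attractorSupport (hΨ : Continuous (Ψ t))
    (hstab : ∀ s ≤ t, ‖Ψ t s‖ ≤ K * Real.exp (-γ * (t - s))) (hγ : 0 < γ)
    (hΨid : ∀ t, Ψ t t = ContinuousLinearMap.id ℝ (Euc d))
    (hΨcoc : ∀ t s r, (Ψ t s).comp (Ψ s r) = Ψ t r) {n : Euc d} (hn : n ≠ 0) :
    ∃ y ∈ Afib d Ψ ρ t, ⟪n, y⟫ = attractorSupport Ψ ρ t n := by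
  set v := fun s => adjoint (Ψ t s) n
  have hv : ∀ s, ‖v s‖ ≠ 0 := fun s =>
    norm_ne_zero_iff.2 (adjoint_flow_apply_ne_zero hΨid hΨcoc t s hn)
  set ξ := fun s => ‖v s‖⁻¹ • v s
  have hξ : ξ ∈ ctrlSet d :=
    ⟨(((continuous_adjoint_flow_apply hΨ n).norm.inv₀ hv).smul
      (continuous_adjoint_flow_apply hΨ n)).measurable,
      fun s => by simp [ξ, norm_smul, hv s]⟩
  refine ⟨_, ⟨ξ, hξ, rfl⟩, ?_⟩
  rw [real_inner_smul_right, ← integral_inner (integrableOn_flow_apply_control hΨ hstab hγ hξ) n,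
    attractorSupport]
  congr 1
  refine setIntegral_congr_fun measurableSet_Iic fun s _ => ?_
  rw [← adjoint_inner_left, real_inner_smul_right, real_inner_self_eq_norm_mul_norm, ← mul_assoc,
    inv_mul_cancel₀ (hv s), one_mul]

theorem norm_add_eq_of_attractorSupport_add_le (hΨ : Continuous (Ψ t))
    (hstab : ∀ s ≤ t, ‖Ψ t s‖ ≤ K * Real.exp (-γ * (t - s))) (hγ : 0 < γ)
    (hΨt : Ψ t t = ContinuousLinearMap.id ℝ (Euc d)) (hρ : 0 < ρ) {a b : Euc d}
    (hab : attractorSupport Ψ ρ t a + attractorSupport Ψ ρ t b ≤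
      attractorSupport Ψ ρ t (a + b)) :
    ‖a + b‖ = ‖a‖ + ‖b‖ := by
  have hI := integrableOn_norm_adjoint_flow_apply hΨ hstab hγ
  have hC := fun n => (continuous_adjoint_flow_apply hΨ n).norm
  set g : ℝ → ℝ := fun s =>
    ‖adjoint (Ψ t s) a‖ + ‖adjoint (Ψ t s) b‖ - ‖adjoint (Ψ t s) (a + b)‖
  have hg0 : 0 ≤ g := fun s => by
    simp only [g, map_add, Pi.zero_apply, sub_nonneg]; exact norm_add_le _ _
  have hgt : g t = 0 := by
    refine Continuous.apply_eq_zero_of_setIntegral_Iic_nonpos (g := g)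
      (((hC a).add (hC b)).sub (hC (a + b))) hg0 (((hI a).add (hI b)).sub (hI (a + b))) ?_
    have hsplit : ∫ s in Iic t, g s = (∫ s in Iic t, ‖adjoint (Ψ t s) a‖) +
        (∫ s in Iic t, ‖adjoint (Ψ t s) b‖) - ∫ s in Iic t, ‖adjoint (Ψ t s) (a + b)‖ := by
      have hI₂ : IntegrableOn (fun s => ‖adjoint (Ψ t s) a‖ + ‖adjoint (Ψ t s) b‖) (Iic t) :=
        (hI a).add (hI b)
      rw [← integral_add (hI a) (hI b), ← integral_sub hI₂ (hI (a + b))]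
    rw [hsplit, sub_nonpos]
    rw [attractorSupport, attractorSupport, attractorSupport, ← mul_add] at hab
    exact le_of_mul_le_mul_left hab hρ
  simp only [g, hΨt, ContinuousLinearMap.adjoint_id, ContinuousLinearMap.id_apply] at hgt
  linarith

theorem convex_ctrlSet : Convex ℝ (ctrlSet d) := by
  rintro ξ₁ ⟨hm₁, hb₁⟩ ξ₂ ⟨hm₂, hb₂⟩ a b ha hb hab
  refine ⟨(hm₁.const_smul a).add (hm₂.const_smul b), fun s => ?_⟩
  simpa using (convex_closedBall (0 : Euc d) 1) (by simpa using hb₁ s) (by simpa using hb₂ s)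
    ha hb hab

theorem convex_Afib (hΨ : Continuous (Ψ t))
    (hstab : ∀ s ≤ t, ‖Ψ t s‖ ≤ K * Real.exp (-γ * (t - s))) (hγ : 0 < γ) :
    Convex ℝ (Afib d Ψ ρ t) := by
  rintro _ ⟨ξ₁, hξ₁, rfl⟩ _ ⟨ξ₂, hξ₂, rfl⟩ a b ha hb hab
  refine ⟨a • ξ₁ + b • ξ₂, convex_ctrlSet hξ₁ hξ₂ ha hb hab, ?_⟩
  have h₁ : IntegrableOn (fun s => a • Ψ t s (ξ₁ s)) (Iic t) :=
    (integrableOn_flow_apply_control hΨ hstab hγ hξ₁).smul a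
  have h₂ : IntegrableOn (fun s => b • Ψ t s (ξ₂ s)) (Iic t) :=
    (integrableOn_flow_apply_control hΨ hstab hγ hξ₂).smul b
  simp only [Pi.add_apply, Pi.smul_apply, map_add, map_smul]
  rw [integral_add h₁ h₂, integral_smul, integral_smul, smul_add, smul_comm ρ a, smul_comm ρ b]

theorem mem_Afib_of_norm_le (hΨ' : Continuous fun s => Ψ s t)
    (hΨid : ∀ t, Ψ t t = ContinuousLinearMap.id ℝ (Euc d))
    (hΨcoc : ∀ t s r, (Ψ t s).comp (Ψ s r) = Ψ t r) (hρ : 0 < ρ) {M : ℝ}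
    (hM : ∀ s ∈ Icc (t - 1) t, ‖Ψ s t‖ ≤ M) {x : Euc d} (hx : M * ‖x‖ ≤ ρ) :
    x ∈ Afib d Ψ ρ t := by
  set ξ := (Icc (t - 1) t).indicator fun s => ρ⁻¹ • Ψ s t x
  have hξ : ξ ∈ ctrlSet d := by
    refine ⟨Measurable.indicator (by fun_prop) measurableSet_Icc, fun s => ?_⟩
    by_cases hs : s ∈ Icc (t - 1) t
    · rw [show ξ s = _ from indicator_of_mem hs _, norm_smul, norm_inv, Real.norm_of_nonneg hρ.le,
        inv_mul_le_iff₀ hρ, mul_one]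
      exact ((Ψ s t).le_opNorm x).trans
        ((mul_le_mul_of_nonneg_right (hM s hs) (norm_nonneg x)).trans hx)
    · simp [ξ, hs]
  refine ⟨ξ, hξ, ?_⟩
  have hflow : (fun s => Ψ t s (ξ s)) = (Icc (t - 1) t).indicator fun _ => ρ⁻¹ • x := by
    funext s
    by_cases hs : s ∈ Icc (t - 1) t
    · simp [ξ, hs, flow_apply_flow hΨid hΨcoc]
    · simp [ξ, hs]
  rw [hflow, setIntegral_indicator measurableSet_Icc, inter_eq_right.2 Icc_subset_Iic_self,
    setIntegral_const, Real.volume_real_Icc_of_le (by linarith), sub_sub_cancel, one_smul,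
    smul_inv_smul₀ hρ.ne']

theorem Afib_mem_nhds_zero (hΨ' : Continuous fun s => Ψ s t)
    (hΨid : ∀ t, Ψ t t = ContinuousLinearMap.id ℝ (Euc d))
    (hΨcoc : ∀ t s r, (Ψ t s).comp (Ψ s r) = Ψ t r) (hρ : 0 < ρ) :
    Afib d Ψ ρ t ∈ nhds 0 := by
  obtain ⟨C, hC⟩ :=
    isCompact_Icc.exists_bound_of_continuousOn (hΨ'.continuousOn (s := Icc (t - 1) t))
  have hM : 0 < max C 1 := lt_max_of_lt_right one_pos
  refine Filter.mem_of_superset (closedBall_mem_nhds 0 (div_pos hρ hM)) fun x hx => ?_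
  rw [mem_closedBall_zero_iff, le_div_iff₀' hM] at hx
  exact mem_Afib_of_norm_le hΨ' hΨid hΨcoc hρ (fun s hs => (hC s hs).trans (le_max_left _ _)) hx

end Attractor

theorem attractor_boundary_unique_normal_general
    (d : ℕ)
    (L : ℝ → (Euc d →L[ℝ] Euc d))
    (Ψ : ℝ → ℝ → (Euc d →L[ℝ] Euc d))
    (hΨc : Continuous fun p : ℝ × ℝ => Ψ p.1 p.2)
    (hΨid : ∀ t : ℝ, Ψ t t = ContinuousLinearMap.id ℝ (Euc d))
    (hΨcoc : ∀ t s r : ℝ, (Ψ t s).comp (Ψ s r) = Ψ t r)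
    (K γ : ℝ) (hγ : 0 < γ)
    (hstab : ∀ s t : ℝ, s ≤ t → ‖Ψ t s‖ ≤ K * Real.exp (-γ * (t - s)))
    (ρ : ℝ) (hρ : 0 < ρ) :
    ∀ t : ℝ, ∀ p ∈ frontier (Afib d Ψ ρ t),
      ∃! n : Euc d, ‖n‖ = 1 ∧ ∀ y ∈ Afib d Ψ ρ t, ⟪n, y⟫ ≤ ⟪n, p⟫ := by
  intro t p hp
  have hΨ : Continuous (Ψ t) := hΨc.comp (continuous_const.prodMk continuous_id)
  have hΨ' : Continuous fun s => Ψ s t := hΨc.comp (continuous_id.prodMk continuous_const)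
  have hstab_t : ∀ s ≤ t, ‖Ψ t s‖ ≤ K * Real.exp (-γ * (t - s)) := fun s hs => hstab s t hs
  obtain ⟨n, hn, hsupp⟩ := (convex_Afib hΨ hstab_t hγ).exists_unit_normal_of_notMem_interior
    ⟨0, mem_interior_iff_mem_nhds.2 (Afib_mem_nhds_zero hΨ' hΨid hΨcoc hρ)⟩ hp.2
  refine ⟨n, ⟨hn, hsupp⟩, fun m ⟨hm, hmsupp⟩ => ?_⟩
  exact eq_of_supporting_unit_normals (inner_le_attractorSupport hΨ hstab_t hγ hρ.le)
    (fun _ => exists_inner_eq_attractorSupport hΨ hstab_t hγ hΨid hΨcoc)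
    (fun _ _ => norm_add_eq_of_attractorSupport_add_le hΨ hstab_t hγ (hΨid t) hρ)
    hp.1 hm hn hmsupp hsupp

/-- Each boundary point of an attractor fibre admits a unique supporting unit normal. -/
theorem attractor_boundary_unique_normal
    (d : ℕ) (hd : 1 ≤ d)
    (L : ℝ → (Euc d →L[ℝ] Euc d)) (hL : Continuous L)
    (Ψ : ℝ → ℝ → (Euc d →L[ℝ] Euc d))
    (hΨc : Continuous fun p : ℝ × ℝ => Ψ p.1 p.2)
    (hΨid : ∀ t : ℝ, Ψ t t = ContinuousLinearMap.id ℝ (Euc d))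
    (hΨcoc : ∀ t s r : ℝ, (Ψ t s).comp (Ψ s r) = Ψ t r)
    (hΨd : ∀ (s : ℝ) (x : Euc d) (t : ℝ), HasDerivAt (fun τ => Ψ τ s x) (L t (Ψ t s x)) t)
    (K γ : ℝ) (hK : 1 ≤ K) (hγ : 0 < γ)
    (hstab : ∀ s t : ℝ, s ≤ t → ‖Ψ t s‖ ≤ K * Real.exp (-γ * (t - s)))
    (ρ : ℝ) (hρ : 0 < ρ) :
    ∀ t : ℝ, ∀ p ∈ frontier (Afib d Ψ ρ t),
      ∃! n : Euc d, ‖n‖ = 1 ∧ ∀ y ∈ Afib d Ψ ρ t, ⟪n, y⟫ ≤ ⟪n, p⟫ :=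
  attractor_boundary_unique_normal_general d L Ψ hΨc hΨid hΨcoc K γ hγ hstab ρ hρ
end
end

section
/- The unit sphere is invariant under the normal component of the boundary system: if n : ℝ → E satisfies HasDerivAt n (-(L t).adjoint (n t) + ⟪n t, (L t).adjoint (n t)⟫ • n t) t for every t ∈ ℝ, and ‖n t₀‖ = 1 for some t₀ ∈ ℝ, then ‖n t‖ = 1 for all t ∈ ℝ. -/
open MeasureTheory Set Metric
open scoped RealInnerProductSpace

noncomputable section

/-! The function `φ t = ‖n t‖² - 1` solves the scalar linear equation `φ' = 2 ⟪n, Lᵀ n⟫ φ`,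
whose coefficient is continuous because `L` is; the integrating factor `exp (-∫ 2 ⟪n, Lᵀ n⟫)` then shows
`φ t = exp (∫_{t₀}^t 2 ⟪n, Lᵀ n⟫) φ t₀`, so `φ` vanishes identically once it vanishes at `t₀`. -/

theorem eq_exp_integral_smul_of_hasDerivAt {E : Type*} [NormedAddCommGroup E] [NormedSpace ℝ E]
    {a : ℝ → ℝ} {φ : ℝ → E} (ha : Continuous a) (hφ : ∀ t, HasDerivAt φ (a t • φ t) t)
    (t₀ t : ℝ) : φ t = Real.exp (∫ s in t₀..t, a s) • φ t₀ := by
  set A : ℝ → ℝ := fun t => ∫ s in t₀..t, a s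
  have hA : ∀ t, HasDerivAt A (a t) t := fun t => (ha.integral_hasStrictDerivAt t₀ t).hasDerivAt
  have hψ : ∀ t, HasDerivAt (fun t => Real.exp (-A t) • φ t) 0 t := fun t => by
    refine ((hA t).neg.exp.smul (hφ t)).congr_deriv ?_
    rw [smul_smul, ← add_smul]
    ring_nf
    exact zero_smul ℝ _
  have hconst := is_const_of_deriv_eq_zero (fun t => (hψ t).differentiableAt)
    (fun t => (hψ t).deriv) t t₀
  have hA₀ : A t₀ = 0 := intervalIntegral.integral_same
  simp only [hA₀, neg_zero, Real.exp_zero, one_smul] at hconst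
  rw [← hconst, smul_smul, ← Real.exp_add, add_neg_cancel, Real.exp_zero, one_smul]

theorem HasDerivAt.norm_sq_sub_one {F : Type*} [NormedAddCommGroup F]
    [InnerProductSpace ℝ F] {n : ℝ → F} {v : F} {t : ℝ}
    (hn : HasDerivAt n (-v + ⟪n t, v⟫ • n t) t) :
    HasDerivAt (fun s => ‖n s‖ ^ 2 - 1) (2 * ⟪n t, v⟫ * (‖n t‖ ^ 2 - 1)) t := by
  refine (hn.norm_sq.sub_const 1).congr_deriv ?_
  rw [inner_add_right, inner_neg_right, inner_smul_right, real_inner_self_eq_norm_sq]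
  ring

theorem unit_sphere_invariant_boundary_system_general
    (d : ℕ)
    (L : ℝ → (Euc d →L[ℝ] Euc d)) (hL : Continuous L)
    (n : ℝ → Euc d)
    (hn : ∀ t : ℝ, HasDerivAt n
      (-(ContinuousLinearMap.adjoint (L t) (n t)) +
        ⟪n t, ContinuousLinearMap.adjoint (L t) (n t)⟫ • n t) t)
    (t₀ : ℝ) (hn₀ : ‖n t₀‖ = 1) :
    ∀ t : ℝ, ‖n t‖ = 1 := by
  intro t
  have hn_cont : Continuous n := continuous_iff_continuousAt.2 fun t => (hn t).continuousAt
  have hLadj_cont : Continuous fun t => ContinuousLinearMap.adjoint (L t) :=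
    ContinuousLinearMap.adjoint.continuous.comp hL
  have ha : Continuous fun t => 2 * ⟪n t, ContinuousLinearMap.adjoint (L t) (n t)⟫ :=
    continuous_const.mul (hn_cont.inner (hLadj_cont.clm_apply hn_cont))
  have hφ := eq_exp_integral_smul_of_hasDerivAt ha
    (fun t => (hn t).norm_sq_sub_one) t₀ t
  rwa [hn₀, one_pow, sub_self, smul_zero, sub_eq_zero,
    pow_eq_one_iff_of_nonneg (norm_nonneg _) two_ne_zero] at hφ

/-- The unit sphere is invariant under the normal component of the boundary system. -/
theorem unit_sphere_invariant_boundary_system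
    (d : ℕ) (hd : 1 ≤ d)
    (L : ℝ → (Euc d →L[ℝ] Euc d)) (hL : Continuous L)
    (n : ℝ → Euc d)
    (hn : ∀ t : ℝ, HasDerivAt n
      (-(ContinuousLinearMap.adjoint (L t) (n t)) +
        ⟪n t, ContinuousLinearMap.adjoint (L t) (n t)⟫ • n t) t)
    (t₀ : ℝ) (hn₀ : ‖n t₀‖ = 1) :
    ∀ t : ℝ, ‖n t‖ = 1 :=
  unit_sphere_invariant_boundary_system_general d L hL n hn t₀ hn₀
end
end

section
/- Normalisation of the adjoint equation yields the normal equation of the boundary system: if η : ℝ → E satisfies HasDerivAt η (-(L t).adjoint (η t)) t for every t ∈ ℝ and η t ≠ 0 for every t, then the normalised function n t := ‖η t‖⁻¹ • η t satisfies HasDerivAt n (-(L t).adjoint (n t) + ⟪n t, (L t).adjoint (n t)⟫ • n t) t for every t ∈ ℝ. -/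
open MeasureTheory Set Metric
open scoped RealInnerProductSpace

noncomputable section

/-! The derivative of `f / ‖f‖` is the component of `f' / ‖f‖` orthogonal to `f / ‖f‖`. For
`f' = -Aᵀ f` this component is `-Aᵀ n + ⟪n, Aᵀ n⟫ n` by linearity of `Aᵀ`. -/

section Normalisation

variable {F : Type*} [NormedAddCommGroup F] [InnerProductSpace ℝ F]
  {f : ℝ → F} {f' : F} {t : ℝ}

theorem HasDerivAt.norm_of_ne_zero (hf : HasDerivAt f f' t) (h0 : f t ≠ 0) :
    HasDerivAt (fun τ => ‖f τ‖) (⟪f t, f'⟫ / ‖f t‖) t := by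
  have hsqrt := hf.norm_sq.sqrt (by positivity)
  simp only [Real.sqrt_sq (norm_nonneg _)] at hsqrt
  convert hsqrt using 1
  field_simp

theorem HasDerivAt.inv_norm_smul (hf : HasDerivAt f f' t) (h0 : f t ≠ 0) :
    HasDerivAt (fun τ => ‖f τ‖⁻¹ • f τ)
      (‖f t‖⁻¹ • f' - ⟪‖f t‖⁻¹ • f t, ‖f t‖⁻¹ • f'⟫ • (‖f t‖⁻¹ • f t)) t := by
  have hr : ‖f t‖ ≠ 0 := norm_ne_zero_iff.mpr h0
  refine (((hf.norm_of_ne_zero h0).inv hr).smul hf).congr_deriv ?_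
  simp only [Pi.inv_apply, real_inner_smul_left, real_inner_smul_right, smul_smul]
  match_scalars <;> field_simp

end Normalisation

theorem normalised_adjoint_solves_boundary_normal_equation_general
    (d : ℕ)
    (L : ℝ → (Euc d →L[ℝ] Euc d))
    (η : ℝ → Euc d)
    (hη : ∀ t : ℝ, HasDerivAt η (-(ContinuousLinearMap.adjoint (L t) (η t))) t)
    (hne : ∀ t : ℝ, η t ≠ 0) :
    ∀ t : ℝ, HasDerivAt (fun τ => ‖η τ‖⁻¹ • η τ)
      (-(ContinuousLinearMap.adjoint (L t) (‖η t‖⁻¹ • η t)) +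
        ⟪‖η t‖⁻¹ • η t, ContinuousLinearMap.adjoint (L t) (‖η t‖⁻¹ • η t)⟫ •
          (‖η t‖⁻¹ • η t)) t := by
  intro t
  refine ((hη t).inv_norm_smul (hne t)).congr_deriv ?_
  simp only [map_smul, smul_neg, inner_neg_right, neg_smul, sub_neg_eq_add]

/-- Normalising a nonvanishing solution of the adjoint equation yields a solution of the
normal equation of the boundary system. -/
theorem normalised_adjoint_solves_boundary_normal_equation
    (d : ℕ) (hd : 1 ≤ d)
    (L : ℝ → (Euc d →L[ℝ] Euc d)) (hL : Continuous L)
    (η : ℝ → Euc d)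
    (hη : ∀ t : ℝ, HasDerivAt η (-(ContinuousLinearMap.adjoint (L t) (η t))) t)
    (hne : ∀ t : ℝ, η t ≠ 0) :
    ∀ t : ℝ, HasDerivAt (fun τ => ‖η τ‖⁻¹ • η τ)
      (-(ContinuousLinearMap.adjoint (L t) (‖η t‖⁻¹ • η t)) +
        ⟪‖η t‖⁻¹ • η t, ContinuousLinearMap.adjoint (L t) (‖η t‖⁻¹ • η t)⟫ •
          (‖η t‖⁻¹ • η t)) t :=
  normalised_adjoint_solves_boundary_normal_equation_general d L η hη hne
end
end

section
/- Trajectories starting in the interior of an invariant set cannot reach its boundary in finite time: let M : ℝ → Set E be a family with each M t nonempty and compact, invariant for the reachable-set operator, i.e. Φ t t₀ (M t₀) = M t for all t₀ ≤ t. Then for every t₀ < t, every admissible control ξ ∈ 𝒰, and every trajectory x with control ξ such that x t₀ ∈ interior (M t₀), one has x t ∉ frontier (M t). -/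
open MeasureTheory Set Metric
open scoped RealInnerProductSpace

noncomputable section

/-- A (Carathéodory) trajectory of `x' = f(t,x) + ρ ξ(t)` with control `ξ`. -/
def IsTrajectory (d : ℕ) (f : ℝ → Euc d → Euc d) (ρ : ℝ) (ξ x : ℝ → Euc d) : Prop :=
  Continuous x ∧ ∀ t₀ t : ℝ, x t = x t₀ + ∫ s in t₀..t, (f s (x s) + ρ • ξ s)

/-- The reachable-set operator of the differential inclusion `x' ∈ closedBall (f t x) ρ`. -/
def reachNL (d : ℕ) (f : ℝ → Euc d → Euc d) (ρ t t₀ : ℝ) (S : Set (Euc d)) : Set (Euc d) :=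
  {y | ∃ ξ ∈ ctrlSet d, ∃ x : ℝ → Euc d, IsTrajectory d f ρ ξ x ∧ x t₀ ∈ S ∧ y = x t}


/-!
Along a fixed control `ξ` the equation reads `x' = g(s, x)` with `g(s, ·)` Lipschitz and
`s ↦ g(s, u(s))` locally integrable for continuous `u`. On every compact interval some iterate of
the Picard map is a contraction, which yields global solutions depending Lipschitz-continuously on
their value at any fixed time. Hence the flow from time `t` back to `t₀` along `ξ` is continuous,
and by invariance the preimage of `interior (M t₀)` under it is an open subset of `M t`
containing `x t`.
-/

open Function intervalIntegral
open scoped NNReal Nat Topology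

variable {E : Type*} [NormedAddCommGroup E]

structure IsLipschitzCaratheodory (g : ℝ → E → E) (K : ℝ≥0) : Prop where
  lipschitzWith : ∀ s, LipschitzWith K (g s)
  intervalIntegrable : ∀ u : ℝ → E, Continuous u → ∀ p q : ℝ,
    IntervalIntegrable (fun s ↦ g s (u s)) volume p q

lemma IsLipschitzCaratheodory.add_forcing {f : ℝ → E → E} {K : ℝ≥0}
    (hf : Continuous fun p : ℝ × E ↦ f p.1 p.2) (hK : ∀ s, LipschitzWith K (f s))
    {h : ℝ → E} (hh : ∀ p q : ℝ, IntervalIntegrable h volume p q) :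
    IsLipschitzCaratheodory (fun s y ↦ f s y + h s) K where
  lipschitzWith s := LipschitzWith.of_dist_le_mul fun x y ↦ by
    simpa only [dist_add_right] using (hK s).dist_le_mul x y
  intervalIntegrable u hu p q :=
    ((hf.comp (continuous_id.prodMk hu)).intervalIntegrable p q).add (hh p q)

variable [NormedSpace ℝ E]

def IsIntegralSolution (g : ℝ → E → E) (x : ℝ → E) : Prop :=
  Continuous x ∧ ∀ t₀ t : ℝ, x t = x t₀ + ∫ s in t₀..t, g s (x s)

namespace IsLipschitzCaratheodory

variable {g : ℝ → E → E} {K : ℝ≥0} {a b c : ℝ}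

def picard (hg : IsLipschitzCaratheodory g K) (hab : a ≤ b) (c : ℝ) (y : E)
    (u : C(Icc a b, E)) : C(Icc a b, E) where
  toFun τ := ODE.picard g c y (IccExtend hab u) τ
  continuous_toFun := (continuous_const.add (continuous_primitive
    (hg.intervalIntegrable _ (u.IccExtend hab).continuous) c)).comp continuous_subtype_val

lemma picard_apply (hg : IsLipschitzCaratheodory g K) (hab : a ≤ b) (y : E) (u : C(Icc a b, E))
    (τ : Icc a b) : hg.picard hab c y u τ = y + ∫ s in c..τ, g s (IccExtend hab u s) :=
  rfl

lemma dist_picard_picard_le (hg : IsLipschitzCaratheodory g K) (hab : a ≤ b) (y y' : E)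
    (u : C(Icc a b, E)) : dist (hg.picard hab c y u) (hg.picard hab c y' u) ≤ dist y y' :=
  (ContinuousMap.dist_le dist_nonneg).2 fun τ ↦ by
    simp only [picard_apply, dist_add_right, le_refl]

lemma dist_iterate_picard_apply_le (hg : IsLipschitzCaratheodory g K) (hab : a ≤ b)
    (hc : c ∈ Icc a b) (y : E) (u v : C(Icc a b, E)) (n : ℕ) (τ : Icc a b) :
    dist ((hg.picard hab c y)^[n] u τ) ((hg.picard hab c y)^[n] v τ) ≤
      (K * |τ - c|) ^ n / n ! * dist u v := by
  induction n generalizing τ with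
  | zero => simpa using ContinuousMap.dist_apply_le_dist τ
  | succ n ih =>
    set P := hg.picard hab c y
    have hint (w : C(Icc a b, E)) :
        IntervalIntegrable (fun s ↦ g s (IccExtend hab w s)) volume c τ :=
      hg.intervalIntegrable _ (w.IccExtend hab).continuous c τ
    rw [iterate_succ_apply', iterate_succ_apply', dist_eq_norm, picard_apply, picard_apply,
      add_sub_add_left_eq_sub, ← integral_sub (hint _) (hint _)]
    calc
      _ ≤ ∫ s in uIoc c τ, K ^ (n + 1) / n ! * dist u v * |s - c| ^ n := by
        rw [norm_intervalIntegral_eq]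
        refine norm_integral_le_of_norm_le (Continuous.integrableOn_uIoc (by fun_prop)) ?_
        refine (ae_restrict_mem measurableSet_Ioc).mono fun s hs ↦ ?_
        have hs : s ∈ Icc a b := uIcc_subset_Icc hc τ.2 (uIoc_subset_uIcc hs)
        rw [← dist_eq_norm, IccExtend_of_mem _ _ hs, IccExtend_of_mem _ _ hs]
        calc
          _ ≤ K * dist (P^[n] u ⟨s, hs⟩) (P^[n] v ⟨s, hs⟩) := (hg.lipschitzWith s).dist_le_mul _ _
          _ ≤ K * ((K * |s - c|) ^ n / n ! * dist u v) := by gcongr; exact ih ⟨s, hs⟩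
          _ = K ^ (n + 1) / n ! * dist u v * |s - c| ^ n := by ring
      _ = (K * |τ - c|) ^ (n + 1) / (n + 1) ! * dist u v := by
        rw [MeasureTheory.integral_const_mul, integral_pow_abs_sub_uIoc, abs_sub_comm,
          Nat.factorial_succ, Nat.cast_mul, Nat.cast_succ]
        field_simp
        ring

lemma dist_iterate_picard_le (hg : IsLipschitzCaratheodory g K) (hab : a ≤ b)
    (hc : c ∈ Icc a b) (y : E) (u v : C(Icc a b, E)) (n : ℕ) :
    dist ((hg.picard hab c y)^[n] u) ((hg.picard hab c y)^[n] v) ≤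
      (K * (b - a)) ^ n / n ! * dist u v := by
  have hba : 0 ≤ b - a := sub_nonneg.2 hab
  refine (ContinuousMap.dist_le (by positivity)).2 fun τ ↦
    (hg.dist_iterate_picard_apply_le hab hc y u v n τ).trans ?_
  have : |(τ : ℝ) - c| ≤ b - a :=
    abs_sub_le_iff.2 ⟨by linarith [τ.2.2, hc.1], by linarith [τ.2.1, hc.2]⟩
  gcongr

lemma exists_contractingWith_iterate_picard (hg : IsLipschitzCaratheodory g K) (hab : a ≤ b)
    (hc : c ∈ Icc a b) :
    ∃ (N : ℕ) (C : ℝ≥0), ∀ y : E, ContractingWith C (hg.picard hab c y)^[N] := by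
  obtain ⟨N, hN⟩ := (FloorSemiring.tendsto_pow_div_factorial_atTop (K * (b - a))).eventually
    (gt_mem_nhds zero_lt_one) |>.exists
  have hba : 0 ≤ b - a := sub_nonneg.2 hab
  exact ⟨N, ⟨_, by positivity⟩, fun y ↦ ⟨hN, LipschitzWith.of_dist_le_mul fun u v ↦
    hg.dist_iterate_picard_le hab hc y u v N⟩⟩

lemma isFixedPt_picard_of_eq_add_integral (hg : IsLipschitzCaratheodory g K) (hab : a ≤ b)
    (hc : c ∈ Icc a b) {y : E} {w : ℝ → E} (hw : Continuous w)
    (h : ∀ τ ∈ Icc a b, w τ = y + ∫ s in c..τ, g s (w s)) :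
    IsFixedPt (hg.picard hab c y) ⟨fun τ ↦ w τ, hw.comp continuous_subtype_val⟩ := by
  ext τ
  rw [picard_apply, ContinuousMap.coe_mk, h τ τ.2]
  congr 1
  refine integral_congr fun s hs ↦ ?_
  rw [IccExtend_of_mem _ _ (uIcc_subset_Icc hc τ.2 hs)]

lemma iccExtend_eq_of_isFixedPt_picard (hg : IsLipschitzCaratheodory g K) (hab : a ≤ b)
    {y : E} {u : C(Icc a b, E)} (hu : IsFixedPt (hg.picard hab c y) u) {τ : ℝ}
    (hτ : τ ∈ Icc a b) : IccExtend hab u τ = y + ∫ s in c..τ, g s (IccExtend hab u s) :=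
  (IccExtend_of_mem _ _ hτ).trans (DFunLike.congr_fun hu _).symm

lemma isIntegralSolution_of_eq_add_integral (hg : IsLipschitzCaratheodory g K) {x : ℝ → E}
    (hx : Continuous x) (h : ∀ t, x t = x c + ∫ s in c..t, g s (x s)) :
    IsIntegralSolution g x := by
  refine ⟨hx, fun t₀ t ↦ ?_⟩
  have hint := hg.intervalIntegrable x hx
  rw [h t, h t₀, add_assoc, integral_add_adjacent_intervals (hint c t₀) (hint t₀ t)]

variable [CompleteSpace E]

lemma exists_isFixedPt_picard (hg : IsLipschitzCaratheodory g K) (hab : a ≤ b)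
    (hc : c ∈ Icc a b) (y : E) : ∃ u, IsFixedPt (hg.picard hab c y) u := by
  have : Nonempty C(Icc a b, E) := ⟨0⟩
  obtain ⟨N, C, hC⟩ := hg.exists_contractingWith_iterate_picard hab hc
  exact ⟨_, (hC y).isFixedPt_fixedPoint_iterate⟩

lemma exists_dist_le_of_isFixedPt_picard (hg : IsLipschitzCaratheodory g K) (hab : a ≤ b)
    (hc : c ∈ Icc a b) : ∃ C : ℝ, ∀ (y y' : E) (u v : C(Icc a b, E)),
      IsFixedPt (hg.picard hab c y) u → IsFixedPt (hg.picard hab c y') v →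
        dist u v ≤ C * dist y y' := by
  obtain ⟨N, C, hC⟩ := hg.exists_contractingWith_iterate_picard hab hc
  refine ⟨(∑ i ∈ Finset.range N, (K * (b - a)) ^ i / i !) / (1 - C), fun y y' u v hu hv ↦ ?_⟩
  -- `u` is the fixed point of the contraction `P^[N]`, and `P` moves `v` by at most `dist y y'`.
  set P := hg.picard hab c y
  have hv_step : dist v (P v) ≤ dist y y' := by
    have := hg.dist_picard_picard_le (c := c) hab y' y v
    rwa [hv.eq, dist_comm y'] at this
  have hvN : dist v (P^[N] v) ≤ (∑ i ∈ Finset.range N, (K * (b - a)) ^ i / i !) * dist y y' := by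
    rw [Finset.sum_mul]
    refine dist_le_range_sum_of_dist_le (f := fun i ↦ P^[i] v) N fun {i} _ ↦ ?_
    calc dist (P^[i] v) (P^[i] (P v))
        ≤ (K * (b - a)) ^ i / i ! * dist v (P v) := hg.dist_iterate_picard_le hab hc y _ _ i
      _ ≤ (K * (b - a)) ^ i / i ! * dist y y' := by gcongr
  rw [dist_comm, (hC y).fixedPoint_unique (hu.iterate N), div_mul_eq_mul_div]
  exact ((hC y).dist_fixedPoint_le v).trans
    (div_le_div_of_nonneg_right hvN (hC y).one_sub_K_pos.le)

lemma eqOn_iccExtend_of_isFixedPt_picard (hg : IsLipschitzCaratheodory g K) {a' b' : ℝ}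
    (hab : a ≤ b) (hab' : a' ≤ b') (hsub : Icc a' b' ⊆ Icc a b) (hc' : c ∈ Icc a' b') {y : E}
    {u : C(Icc a b, E)} {u' : C(Icc a' b', E)} (hu : IsFixedPt (hg.picard hab c y) u)
    (hu' : IsFixedPt (hg.picard hab' c y) u') :
    EqOn (IccExtend hab' u') (IccExtend hab u) (Icc a' b') := fun τ hτ ↦ by
  have hrestrict := hg.isFixedPt_picard_of_eq_add_integral hab' hc'
    (u.IccExtend hab).continuous fun τ hτ ↦ hg.iccExtend_eq_of_isFixedPt_picard hab hu (hsub hτ)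
  obtain ⟨C, hC⟩ := hg.exists_dist_le_of_isFixedPt_picard hab' hc'
  have hu'_eq := hC y y _ _ hu' hrestrict
  rw [dist_self, mul_zero, dist_le_zero] at hu'_eq
  rw [IccExtend_of_mem _ _ hτ, hu'_eq]
  rfl

theorem exists_isIntegralSolution (hg : IsLipschitzCaratheodory g K) (c : ℝ) (y : E) :
    ∃ x, IsIntegralSolution g x ∧ x c = y := by
  have hab (T : ℝ≥0) : c - T ≤ c + T := by linarith [T.2]
  have hc (T : ℝ≥0) : c ∈ Icc (c - T) (c + T) := ⟨by linarith [T.2], by linarith [T.2]⟩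
  choose u hu using fun T : ℝ≥0 ↦ hg.exists_isFixedPt_picard (hab T) (hc T) y
  have hmono {T₁ T₂ : ℝ≥0} (h : T₁ ≤ T₂) :
      EqOn (IccExtend (hab T₁) (u T₁)) (IccExtend (hab T₂) (u T₂)) (Icc (c - T₁) (c + T₁)) :=
    hg.eqOn_iccExtend_of_isFixedPt_picard _ _ (Icc_subset_Icc (by gcongr) (by gcongr)) (hc T₁)
      (hu T₂) (hu T₁)
  -- Fixed points on nested intervals agree, so `x s` may be read off any interval containing `s`.
  set x : ℝ → E := fun s ↦ IccExtend (hab (nndist s c)) (u (nndist s c)) s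
  have hmem (s : ℝ) : s ∈ Icc (c - nndist s c) (c + nndist s c) := by
    rw [coe_nndist, ← Real.closedBall_eq_Icc]
    exact mem_closedBall.2 le_rfl
  have hx (T : ℝ≥0) : EqOn x (IccExtend (hab T) (u T)) (Icc (c - T) (c + T)) := fun s hs ↦ by
    rcases le_total (nndist s c) T with h | h
    · exact hmono h (hmem s)
    · exact (hmono h hs).symm
  have hx_eq (t : ℝ) : x t = y + ∫ s in c..t, g s (x s) := by
    rw [hx _ (hmem t), hg.iccExtend_eq_of_isFixedPt_picard _ (hu _) (hmem t)]
    exact congrArg (y + ·) (integral_congr fun s hs ↦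
      congrArg (g s) (hx _ (uIcc_subset_Icc (hc _) (hmem t) hs)).symm)
  have hxc : x c = y := by simpa using hx_eq c
  have hcont : Continuous x := continuous_iff_continuousAt.2 fun s ↦ by
    set T : ℝ≥0 := nndist s c + 1
    have hnhds : Icc (c - T) (c + T) ∈ 𝓝 s := by
      rw [← Real.closedBall_eq_Icc]
      refine closedBall_mem_nhds_of_mem (mem_ball.2 ?_)
      rw [dist_nndist]
      exact_mod_cast lt_add_one _
    exact ((u T).IccExtend (hab T)).continuous.continuousAt.congr_of_eventuallyEq
      (Filter.eventually_of_mem hnhds (hx T))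
  exact ⟨x, hg.isIntegralSolution_of_eq_add_integral hcont fun t ↦ hxc ▸ hx_eq t, hxc⟩

theorem exists_dist_le_mul_dist (hg : IsLipschitzCaratheodory g K) (c t : ℝ) :
    ∃ C : ℝ, ∀ {x x' : ℝ → E}, IsIntegralSolution g x → IsIntegralSolution g x' →
      dist (x t) (x' t) ≤ C * dist (x c) (x' c) := by
  have hab : c ⊓ t ≤ c ⊔ t := inf_le_sup
  obtain ⟨C, hC⟩ := hg.exists_dist_le_of_isFixedPt_picard hab left_mem_uIcc
  refine ⟨C, fun {x x'} hx hx' ↦ ?_⟩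
  have hfix {x : ℝ → E} (hx : IsIntegralSolution g x) :=
    hg.isFixedPt_picard_of_eq_add_integral hab left_mem_uIcc hx.1 fun τ _ ↦ hx.2 c τ
  exact (ContinuousMap.dist_apply_le_dist ⟨t, right_mem_uIcc⟩).trans
    (hC _ _ _ _ (hfix hx) (hfix hx'))

end IsLipschitzCaratheodory

lemma intervalIntegrable_of_mem_ctrlSet {d : ℕ} {ξ : ℝ → Euc d} (hξ : ξ ∈ ctrlSet d) (p q : ℝ) :
    IntervalIntegrable ξ volume p q :=
  intervalIntegrable_iff.2 (Measure.integrableOn_of_bounded measure_Ioc_lt_top.ne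
    hξ.1.aestronglyMeasurable (ae_of_all _ hξ.2))

theorem interior_trajectories_avoid_boundary_general
    (d : ℕ)
    (f : ℝ → Euc d → Euc d)
    (hf : Continuous fun p : ℝ × Euc d => f p.1 p.2)
    (l : NNReal) (hlip : ∀ t : ℝ, LipschitzWith l (f t))
    (ρ : ℝ)
    (M : ℝ → Set (Euc d))
    (hMinv : ∀ t₀ t : ℝ, t₀ ≤ t → reachNL d f ρ t t₀ (M t₀) = M t) :
    ∀ t₀ t : ℝ, t₀ < t → ∀ ξ ∈ ctrlSet d, ∀ x : ℝ → Euc d,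
      IsTrajectory d f ρ ξ x → x t₀ ∈ interior (M t₀) → x t ∉ frontier (M t) := by
  intro t₀ t ht ξ hξ x hx hx₀
  have hg : IsLipschitzCaratheodory (fun s y ↦ f s y + ρ • ξ s) l :=
    .add_forcing hf hlip fun p q ↦ (intervalIntegrable_of_mem_ctrlSet hξ p q).smul ρ
  -- `y ↦ z y t₀` is the flow from time `t` back to `t₀` along `ξ`.
  choose z hz hzt using hg.exists_isIntegralSolution t
  obtain ⟨C, hC⟩ := hg.exists_dist_le_mul_dist t t₀
  have hflow : Continuous fun y ↦ z y t₀ :=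
    (LipschitzWith.of_dist_le' fun y y' ↦ by simpa only [hzt] using hC (hz y) (hz y')).continuous
  have hzx : z (x t) t₀ = x t₀ :=
    dist_le_zero.1 (by simpa only [hzt, dist_self, mul_zero] using hC (hz (x t)) hx)
  have hsub : (fun y ↦ z y t₀) ⁻¹' interior (M t₀) ⊆ M t := fun y hy ↦
    hMinv t₀ t ht.le ▸ ⟨ξ, hξ, z y, hz y, interior_subset hy, (hzt y).symm⟩
  have hxt : x t ∈ interior (M t) :=
    interior_maximal hsub (isOpen_interior.preimage hflow) (show z (x t) t₀ ∈ _ from hzx ▸ hx₀)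
  exact fun hfr ↦ hfr.2 hxt

/-- Trajectories starting in the interior of an invariant set cannot reach its boundary
in finite time. -/
theorem interior_trajectories_avoid_boundary
    (d : ℕ) (hd : 1 ≤ d)
    (f : ℝ → Euc d → Euc d)
    (hf : Continuous fun p : ℝ × Euc d => f p.1 p.2)
    (l : NNReal) (hlip : ∀ t : ℝ, LipschitzWith l (f t))
    (ρ : ℝ) (hρ : 0 < ρ)
    (M : ℝ → Set (Euc d))
    (hMne : ∀ t : ℝ, (M t).Nonempty)
    (hMcp : ∀ t : ℝ, IsCompact (M t))
    (hMinv : ∀ t₀ t : ℝ, t₀ ≤ t → reachNL d f ρ t t₀ (M t₀) = M t) :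
    ∀ t₀ t : ℝ, t₀ < t → ∀ ξ ∈ ctrlSet d, ∀ x : ℝ → Euc d,
      IsTrajectory d f ρ ξ x → x t₀ ∈ interior (M t₀) → x t ∉ frontier (M t) :=
  interior_trajectories_avoid_boundary_general d f hf l hlip ρ M hMinv
end
end
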